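/- arXiv:1703.05453 — 5 statements merged into one kernel-verified Lean document; each statement's English description precedes it below -/
import Mathlib

section
/- Let g be a finite-dimensional real Lie algebra, let I be an abelian Lie ideal of g with finrank ℝ I = r, and let s be a Lie subalgebra of g that is a semisimple Lie algebra, such that g is the internal direct sum of s and I as ℝ-submodules (i.e., s ⊓ I = ⊥ and s ⊔ I = ⊤). Assume moreover that the adjoint action of s on I is faithful, i.e., the only x ∈ s with ⁅x,y⁆ = 0 for all y ∈ I is x = 0. Then there exists an injective Lie algebra homomorphism from g into gl(r+1,ℝ). -/
attribute [local instance] LieRing.ofAssociativeRing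

set_option maxHeartbeats 1000000 in
/-- If a finite-dimensional real Lie algebra `g` is the internal direct sum (as `ℝ`-submodules)
of a semisimple subalgebra `s` and an abelian ideal `I` of dimension `r`, and the adjoint
action of `s` on `I` is faithful, then `g` embeds into `gl(r+1, ℝ)`. -/
theorem abelian_radical_levi_rep (g : Type*) [LieRing g] [LieAlgebra ℝ g] [Module.Finite ℝ g]
    (r : ℕ) (I : LieIdeal ℝ g) (hab : IsLieAbelian ↥I) (hr : Module.finrank ℝ ↥I = r)
    (s : LieSubalgebra ℝ g) [LieAlgebra.HasTrivialRadical ℝ ↥s]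
    (hinf : LieSubalgebra.toSubmodule s ⊓ LieSubmodule.toSubmodule I = ⊥)
    (hsup : LieSubalgebra.toSubmodule s ⊔ LieSubmodule.toSubmodule I = ⊤)
    (hfaith : ∀ x : g, x ∈ s → (∀ y : g, y ∈ I → ⁅x, y⁆ = 0) → x = 0) :
    ∃ f : g →ₗ⁅ℝ⁆ Matrix (Fin (r + 1)) (Fin (r + 1)) ℝ, Function.Injective f := by
  classical
  have hcompl : IsCompl (LieSubmodule.toSubmodule I) (LieSubalgebra.toSubmodule s) :=
    ⟨disjoint_iff.mpr (by rw [inf_comm]; exact hinf),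
     codisjoint_iff.mpr (by rw [sup_comm]; exact hsup)⟩
  let π : g →ₗ[ℝ] ↥I := Submodule.linearProjOfIsCompl _ _ hcompl
  have hπI : ∀ w : ↥I, π (w : g) = w := fun w =>
    Submodule.linearProjOfIsCompl_apply_left hcompl w
  have hπs : ∀ x : g, x ∈ s → π x = 0 := fun x hx =>
    Submodule.linearProjOfIsCompl_apply_right' hcompl hx
  have hsub : ∀ x : g, x - (π x : g) ∈ s := by
    intro x
    have h := Submodule.projection_add_projection_eq_self hcompl x
    have h2 : x - (π x : g) =
        ((LieSubalgebra.toSubmodule s).linearProjOfIsCompl _ hcompl.symm x : g) :=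
      sub_eq_of_eq_add' h.symm
    rw [h2]; exact Subtype.mem _
  let T : g →ₗ⁅ℝ⁆ Module.End ℝ ↥I := LieModule.toEnd ℝ g ↥I
  have hTcoe : ∀ (y : g) (w : ↥I), (T y w : g) = ⁅y, (w : g)⁆ := fun _ _ => rfl
  have habel : ∀ u v : ↥I, ⁅(u : g), (v : g)⁆ = 0 := by
    intro u v
    have h0 : ⁅u, v⁆ = (0 : ↥I) := trivial_lie_zero _ _ _ _
    calc ⁅(u : g), (v : g)⁆ = ((⁅u, v⁆ : ↥I) : g) := rfl
      _ = ((0 : ↥I) : g) := by rw [h0]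
      _ = 0 := rfl
  -- key identity : π ⁅y, z⁆ = ⁅y, π z⁆ - ⁅z, π y⁆
  have key : ∀ y z : g, π ⁅y, z⁆ = T y (π z) - T z (π y) := by
    intro y z
    set a : g := y - (π y : g) with ha
    set b : g := z - (π z : g) with hb
    have hy : y = a + (π y : g) := by rw [ha]; abel
    have hz : z = b + (π z : g) := by rw [hb]; abel
    have has : a ∈ s := hsub y
    have hbs : b ∈ s := hsub z
    have hIab : ⁅a, b⁆ ∈ s := s.lie_mem has hbs
    have huv : ⁅((π y : ↥I) : g), ((π z : ↥I) : g)⁆ = 0 := habel _ _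
    have hvu : ⁅((π z : ↥I) : g), ((π y : ↥I) : g)⁆ = 0 := habel _ _
    have h1 : ⁅a, ((π z : ↥I) : g)⁆ ∈ I := I.lie_mem (π z).2
    have h2 : ⁅((π y : ↥I) : g), b⁆ ∈ I := by
      rw [← lie_skew]; exact neg_mem (I.lie_mem (π y).2)
    have hdecomp : ⁅y, z⁆ = ⁅a, b⁆ + ⁅a, ((π z : ↥I) : g)⁆ + ⁅((π y : ↥I) : g), b⁆ := by
      conv_lhs => rw [hy, hz]
      rw [add_lie, lie_add, lie_add, huv]
      abel
    have hπ1 : π ⁅a, ((π z : ↥I) : g)⁆ = ⟨_, h1⟩ := hπI ⟨_, h1⟩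
    have hπ2 : π ⁅((π y : ↥I) : g), b⁆ = ⟨_, h2⟩ := hπI ⟨_, h2⟩
    have hL : (π ⁅y, z⁆ : g) = ⁅a, ((π z : ↥I) : g)⁆ + ⁅((π y : ↥I) : g), b⁆ := by
      rw [hdecomp, map_add, map_add, hπs _ hIab, hπ1, hπ2]
      simp
    apply Subtype.ext
    rw [hL]
    show _ = (T y (π z) : g) - (T z (π y) : g)
    rw [hTcoe, hTcoe]
    have e1 : ⁅y, ((π z : ↥I) : g)⁆ = ⁅a, ((π z : ↥I) : g)⁆ := by
      conv_lhs => rw [hy]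
      rw [add_lie, huv, add_zero]
    have e2 : ⁅z, ((π y : ↥I) : g)⁆ = ⁅b, ((π y : ↥I) : g)⁆ := by
      conv_lhs => rw [hz]
      rw [add_lie, hvu, add_zero]
    rw [e1, e2, ← lie_skew b]
    abel
  -- the representation on I × ℝ
  let B : g →ₗ[ℝ] (↥I × ℝ) →ₗ[ℝ] (↥I × ℝ) :=
    LinearMap.mk₂ ℝ (fun y p => (T y p.1 + p.2 • π y, 0))
      (fun y₁ y₂ p => by
        rw [Prod.ext_iff]
        refine ⟨?_, by simp⟩
        show T (y₁ + y₂) p.1 + p.2 • π (y₁ + y₂) = _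
        simp only [map_add, LinearMap.add_apply, smul_add, Prod.fst_add]
        abel)
      (fun c y p => by
        rw [Prod.ext_iff]
        refine ⟨?_, by simp⟩
        show T (c • y) p.1 + p.2 • π (c • y) = _
        simp only [map_smul, LinearMap.smul_apply, Prod.smul_fst]
        module)
      (fun y p₁ p₂ => by
        rw [Prod.ext_iff]
        refine ⟨?_, by simp⟩
        show T y (p₁ + p₂).1 + (p₁ + p₂).2 • π y = _
        simp only [Prod.fst_add, Prod.snd_add, map_add, add_smul]
        abel)
      (fun c y p => by
        rw [Prod.ext_iff]
        refine ⟨?_, by simp⟩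
        show T y (c • p).1 + (c • p).2 • π y = _
        simp only [Prod.smul_fst, Prod.smul_snd, map_smul, smul_eq_mul, mul_smul]
        module)
  have hBapply : ∀ y p, B y p = (T y p.1 + p.2 • π y, (0 : ℝ)) := fun y p => rfl
  have hlie : ∀ y z : g, B ⁅y, z⁆ = ⁅B y, B z⁆ := by
    intro y z
    apply LinearMap.ext
    intro p
    have hbr : (⁅B y, B z⁆ : Module.End ℝ (↥I × ℝ)) p = B y (B z p) - B z (B y p) := by
      rw [Ring.lie_def]
      simp [LinearMap.sub_apply, Module.End.mul_apply]
    rw [hbr, Prod.ext_iff]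
    constructor
    · simp only [hBapply, Prod.fst_sub, smul_zero, add_zero]
      rw [key y z, T.map_lie]
      have hh : (⁅T y, T z⁆ : Module.End ℝ ↥I) p.1 = T y (T z p.1) - T z (T y p.1) := by
        rw [Ring.lie_def]
        simp [LinearMap.sub_apply, Module.End.mul_apply]
      rw [hh]
      simp only [map_add, map_smul, smul_sub, zero_smul, smul_zero, add_zero]
      abel
    · simp only [hBapply, Prod.snd_sub, sub_zero]
  let ρ : g →ₗ⁅ℝ⁆ Module.End ℝ (↥I × ℝ) :=
    { toLinearMap := B
      map_lie' := fun {y z} => hlie y z }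
  have hρB : ∀ y p, ρ y p = B y p := fun _ _ => rfl
  have hρinj : Function.Injective ρ := by
    intro y₁ y₂ h
    rw [← sub_eq_zero]
    have h0 : B (y₁ - y₂) = 0 := by
      rw [map_sub, show B y₁ = B y₂ from h, sub_self]
    set y := y₁ - y₂ with hy
    have hπy : π y = 0 := by
      have h1 := congrArg (fun F : Module.End ℝ (↥I × ℝ) => (F (0, 1)).1) h0
      simpa [hBapply] using h1
    have hys : y ∈ s := by
      have h2 : y - (π y : g) ∈ s := hsub y
      rwa [hπy, ZeroMemClass.coe_zero, sub_zero] at h2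
    refine hfaith y hys ?_
    intro w hw
    have h3 := congrArg (fun F : Module.End ℝ (↥I × ℝ) => (F ((⟨w, hw⟩ : ↥I), 0)).1) h0
    simp only [hBapply] at h3
    have h4 : T y (⟨w, hw⟩ : ↥I) = 0 := by simpa using h3
    have h5 := congrArg Subtype.val h4
    exact h5
  -- transport to matrices
  have hrank : Module.finrank ℝ (↥I × ℝ) = r + 1 := by
    rw [Module.finrank_prod, hr, Module.finrank_self]
  let b : Module.Basis (Fin (r + 1)) ℝ (↥I × ℝ) :=
    (Module.finBasis ℝ (↥I × ℝ)).reindex (finCongr hrank)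
  let e : Module.End ℝ (↥I × ℝ) ≃ₗ⁅ℝ⁆ Matrix (Fin (r + 1)) (Fin (r + 1)) ℝ :=
    (algEquivMatrix b).toLieEquiv
  refine ⟨(e : Module.End ℝ (↥I × ℝ) →ₗ⁅ℝ⁆ _).comp ρ, ?_⟩
  intro x y hxy
  apply hρinj
  exact e.injective hxy
end

section
/- The set S of real 4×4 matrices of the form [[a, b, 0, d],[c, −a, 0, e],[e, −d, 0, f],[0, 0, 0, 0]] with a,b,c,d,e,f ∈ ℝ is a Lie subalgebra of gl(4,ℝ) of dimension 6 over ℝ; the subset I of such matrices with a = b = c = 0 is a 3-dimensional nilpotent Lie ideal of S with 1-dimensional center (the Heisenberg algebra), and I equals the solvable radical of S. -/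
attribute [local instance 100] LieRing.ofAssociativeRing

set_option maxHeartbeats 1000000
set_option synthInstance.maxHeartbeats 400000


noncomputable def m6 (a b c d e f : ℝ) : Matrix (Fin 4) (Fin 4) ℝ :=
  !![a, b, 0, d; c, -a, 0, e; e, -d, 0, f; 0, 0, 0, 0]

@[simp] lemma m6_00 (a b c d e f : ℝ) : m6 a b c d e f 0 0 = a := by simp [m6]
@[simp] lemma m6_01 (a b c d e f : ℝ) : m6 a b c d e f 0 1 = b := by simp [m6]
@[simp] lemma m6_10 (a b c d e f : ℝ) : m6 a b c d e f 1 0 = c := by simp [m6]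
@[simp] lemma m6_03 (a b c d e f : ℝ) : m6 a b c d e f 0 3 = d := by simp [m6]
@[simp] lemma m6_13 (a b c d e f : ℝ) : m6 a b c d e f 1 3 = e := by simp [m6]
@[simp] lemma m6_23 (a b c d e f : ℝ) : m6 a b c d e f 2 3 = f := by simp [m6]

lemma m6_add (a b c d e f a' b' c' d' e' f' : ℝ) :
    m6 a b c d e f + m6 a' b' c' d' e' f' = m6 (a+a') (b+b') (c+c') (d+d') (e+e') (f+f') := by
  ext i j
  fin_cases i <;> fin_cases j <;>
    simp [m6, Matrix.vecHead, Matrix.vecTail] <;> ring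

lemma m6_smul (t a b c d e f : ℝ) :
    t • m6 a b c d e f = m6 (t*a) (t*b) (t*c) (t*d) (t*e) (t*f) := by
  ext i j
  fin_cases i <;> fin_cases j <;>
    simp [m6, Matrix.vecHead, Matrix.vecTail]

lemma m6_zero : m6 0 0 0 0 0 0 = 0 := by
  ext i j; fin_cases i <;> fin_cases j <;> simp [m6, Matrix.vecHead, Matrix.vecTail]

set_option maxHeartbeats 2000000 in
lemma m6_bracket (a b c d e f a' b' c' d' e' f' : ℝ) :
    ⁅m6 a b c d e f, m6 a' b' c' d' e' f'⁆ =
      m6 (b*c' - c*b') (2*(a*b') - 2*(b*a')) (2*(c*a') - 2*(a*c'))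
        (a*d' + b*e' - d*a' - e*b') (-(a*e') + c*d' - d*c' + e*a')
        (2*(e*d') - 2*(d*e')) := by
  rw [Ring.lie_def]
  ext i j
  fin_cases i <;> fin_cases j <;>
    simp [m6, Matrix.mul_apply, Matrix.sub_apply, Fin.sum_univ_four,
      Matrix.vecHead, Matrix.vecTail] <;> ring

noncomputable def SL : LieSubalgebra ℝ (Matrix (Fin 4) (Fin 4) ℝ) where
  carrier := {M | ∃ a b c d e f : ℝ,
    M = !![a, b, 0, d; c, -a, 0, e; e, -d, 0, f; 0, 0, 0, 0]}
  add_mem' := by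
    rintro X Y ⟨a,b,c,d,e,f,rfl⟩ ⟨a',b',c',d',e',f',rfl⟩
    exact ⟨a+a', b+b', c+c', d+d', e+e', f+f', m6_add a b c d e f a' b' c' d' e' f'⟩
  zero_mem' := ⟨0,0,0,0,0,0, by rw [show (!![(0:ℝ),0,0,0;0,-0,0,0;0,-0,0,0;0,0,0,0]) = m6 0 0 0 0 0 0 from rfl, m6_zero]⟩
  smul_mem' := by
    rintro t X ⟨a,b,c,d,e,f,rfl⟩
    exact ⟨t*a, t*b, t*c, t*d, t*e, t*f, m6_smul t a b c d e f⟩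
  lie_mem' := by
    rintro X Y ⟨a,b,c,d,e,f,rfl⟩ ⟨a',b',c',d',e',f',rfl⟩
    exact ⟨_, _, _, _, _, _, (m6_bracket a b c d e f a' b' c' d' e' f')⟩


noncomputable def ca (x : ↥SL) : ℝ := (x : Matrix (Fin 4) (Fin 4) ℝ) 0 0
noncomputable def cb (x : ↥SL) : ℝ := (x : Matrix (Fin 4) (Fin 4) ℝ) 0 1
noncomputable def cc (x : ↥SL) : ℝ := (x : Matrix (Fin 4) (Fin 4) ℝ) 1 0
noncomputable def cd (x : ↥SL) : ℝ := (x : Matrix (Fin 4) (Fin 4) ℝ) 0 3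
noncomputable def ce (x : ↥SL) : ℝ := (x : Matrix (Fin 4) (Fin 4) ℝ) 1 3
noncomputable def cf (x : ↥SL) : ℝ := (x : Matrix (Fin 4) (Fin 4) ℝ) 2 3

lemma mem_SL (M : Matrix (Fin 4) (Fin 4) ℝ) :
    M ∈ SL ↔ ∃ a b c d e f : ℝ, M = m6 a b c d e f := Iff.rfl

lemma m6_mem (a b c d e f : ℝ) : m6 a b c d e f ∈ SL := ⟨a,b,c,d,e,f,rfl⟩

lemma rep (x : ↥SL) :
    (x : Matrix (Fin 4) (Fin 4) ℝ) = m6 (ca x) (cb x) (cc x) (cd x) (ce x) (cf x) := by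
  obtain ⟨a,b,c,d,e,f,h⟩ := (mem_SL _).mp x.2
  simp only [ca, cb, cc, cd, ce, cf, h, m6_00, m6_01, m6_10, m6_03, m6_13, m6_23]

lemma coords_eq_zero (x : ↥SL) (h0 : ca x = 0) (h1 : cb x = 0) (h2 : cc x = 0)
    (h3 : cd x = 0) (h4 : ce x = 0) (h5 : cf x = 0) : x = 0 := by
  apply Subtype.ext
  rw [show ((0 : ↥SL) : Matrix (Fin 4) (Fin 4) ℝ) = 0 from rfl]
  rw [rep x, h0, h1, h2, h3, h4, h5, m6_zero]

lemma coe_bracket' (x y : ↥SL) :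
    ((⁅x, y⁆ : ↥SL) : Matrix (Fin 4) (Fin 4) ℝ) = ⁅(x : Matrix (Fin 4) (Fin 4) ℝ), (y : Matrix (Fin 4) (Fin 4) ℝ)⁆ :=
  LieSubalgebra.coe_bracket SL x y

lemma bracket_coe_eq (x y : ↥SL) :
    ((⁅x, y⁆ : ↥SL) : Matrix (Fin 4) (Fin 4) ℝ) =
      m6 (cb x * cc y - cc x * cb y) (2*(ca x * cb y) - 2*(cb x * ca y))
        (2*(cc x * ca y) - 2*(ca x * cc y))
        (ca x * cd y + cb x * ce y - cd x * ca y - ce x * cb y)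
        (-(ca x * ce y) + cc x * cd y - cd x * cc y + ce x * ca y)
        (2*(ce x * cd y) - 2*(cd x * ce y)) := by
  rw [coe_bracket', rep x, rep y, m6_bracket]

lemma ca_bracket (x y : ↥SL) : ca ⁅x,y⁆ = cb x * cc y - cc x * cb y := by
  rw [ca, bracket_coe_eq]; simp
lemma cb_bracket (x y : ↥SL) : cb ⁅x,y⁆ = 2*(ca x * cb y) - 2*(cb x * ca y) := by
  rw [cb, bracket_coe_eq]; simp
lemma cc_bracket (x y : ↥SL) : cc ⁅x,y⁆ = 2*(cc x * ca y) - 2*(ca x * cc y) := by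
  rw [cc, bracket_coe_eq]; simp
lemma cd_bracket (x y : ↥SL) :
    cd ⁅x,y⁆ = ca x * cd y + cb x * ce y - cd x * ca y - ce x * cb y := by
  rw [cd, bracket_coe_eq]; simp
lemma ce_bracket (x y : ↥SL) :
    ce ⁅x,y⁆ = -(ca x * ce y) + cc x * cd y - cd x * cc y + ce x * ca y := by
  rw [ce, bracket_coe_eq]; simp
lemma cf_bracket (x y : ↥SL) : cf ⁅x,y⁆ = 2*(ce x * cd y) - 2*(cd x * ce y) := by
  rw [cf, bracket_coe_eq]; simp

lemma coe_smul' (t : ℝ) (x : ↥SL) :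
    ((t • x : ↥SL) : Matrix (Fin 4) (Fin 4) ℝ) = t • (x : Matrix (Fin 4) (Fin 4) ℝ) := rfl

@[simp] lemma ca_add (x y : ↥SL) : ca (x + y) = ca x + ca y := by simp [ca]
@[simp] lemma cb_add (x y : ↥SL) : cb (x + y) = cb x + cb y := by simp [cb]
@[simp] lemma cc_add (x y : ↥SL) : cc (x + y) = cc x + cc y := by simp [cc]
@[simp] lemma cd_add (x y : ↥SL) : cd (x + y) = cd x + cd y := by simp [cd]
@[simp] lemma ce_add (x y : ↥SL) : ce (x + y) = ce x + ce y := by simp [ce]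
@[simp] lemma cf_add (x y : ↥SL) : cf (x + y) = cf x + cf y := by simp [cf]
@[simp] lemma ca_smul (t : ℝ) (x : ↥SL) : ca (t • x) = t * ca x := by simp [ca, coe_smul', Matrix.smul_apply, smul_eq_mul]
@[simp] lemma cb_smul (t : ℝ) (x : ↥SL) : cb (t • x) = t * cb x := by simp [cb, coe_smul', Matrix.smul_apply, smul_eq_mul]
@[simp] lemma cc_smul (t : ℝ) (x : ↥SL) : cc (t • x) = t * cc x := by simp [cc, coe_smul', Matrix.smul_apply, smul_eq_mul]
@[simp] lemma cd_smul (t : ℝ) (x : ↥SL) : cd (t • x) = t * cd x := by simp [cd, coe_smul', Matrix.smul_apply, smul_eq_mul]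
@[simp] lemma ce_smul (t : ℝ) (x : ↥SL) : ce (t • x) = t * ce x := by simp [ce, coe_smul', Matrix.smul_apply, smul_eq_mul]
@[simp] lemma cf_smul (t : ℝ) (x : ↥SL) : cf (t • x) = t * cf x := by simp [cf, coe_smul', Matrix.smul_apply, smul_eq_mul]
@[simp] lemma ca_zero : ca (0 : ↥SL) = 0 := by simp [ca]
@[simp] lemma cb_zero : cb (0 : ↥SL) = 0 := by simp [cb]
@[simp] lemma cc_zero : cc (0 : ↥SL) = 0 := by simp [cc]
@[simp] lemma cd_zero : cd (0 : ↥SL) = 0 := by simp [cd]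
@[simp] lemma ce_zero : ce (0 : ↥SL) = 0 := by simp [ce]
@[simp] lemma cf_zero : cf (0 : ↥SL) = 0 := by simp [cf]


noncomputable def eqS : ↥SL ≃ₗ[ℝ] (Fin 6 → ℝ) where
  toFun x := ![ca x, cb x, cc x, cd x, ce x, cf x]
  invFun v := ⟨m6 (v 0) (v 1) (v 2) (v 3) (v 4) (v 5), m6_mem _ _ _ _ _ _⟩
  left_inv x := by
    apply Subtype.ext
    simp only [Matrix.cons_val_zero, Matrix.cons_val_one, Matrix.head_cons,
      Matrix.cons_val_two, Matrix.tail_cons, Matrix.cons_val_three, Matrix.cons_val_four,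
      Matrix.cons_val_succ]
    exact (rep x).symm
  right_inv v := by
    funext i
    fin_cases i <;>
      (try simp [ca, cb, cc, cd, ce, cf]) <;> rfl
  map_add' x y := by
    funext i
    fin_cases i <;> simp <;> rfl
  map_smul' t x := by
    funext i
    fin_cases i <;> simp <;> rfl

lemma finrank_SL : Module.finrank ℝ ↥SL = 6 := by
  rw [eqS.finrank_eq]
  simp


noncomputable def Idef : LieIdeal ℝ ↥SL where
  carrier := {x | ca x = 0 ∧ cb x = 0 ∧ cc x = 0}
  add_mem' := by
    rintro x y ⟨h1, h2, h3⟩ ⟨g1, g2, g3⟩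
    refine ⟨?_, ?_, ?_⟩ <;> simp [h1, h2, h3, g1, g2, g3]
  zero_mem' := by refine ⟨?_, ?_, ?_⟩ <;> simp
  smul_mem' := by
    rintro t x ⟨h1, h2, h3⟩
    refine ⟨?_, ?_, ?_⟩ <;> simp [h1, h2, h3]
  lie_mem := by
    rintro x m ⟨h1, h2, h3⟩
    refine ⟨?_, ?_, ?_⟩ <;>
      simp [ca_bracket, cb_bracket, cc_bracket, h1, h2, h3]

lemma mem_Idef (x : ↥SL) : x ∈ Idef ↔ ca x = 0 ∧ cb x = 0 ∧ cc x = 0 := Iff.rfl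

lemma mem_Idef' (x : ↥SL) : x ∈ Idef ↔ ∃ d e f : ℝ,
    (x : Matrix (Fin 4) (Fin 4) ℝ) = !![0, 0, 0, d; 0, 0, 0, e; e, -d, 0, f; 0, 0, 0, 0] := by
  constructor
  · rintro ⟨h1, h2, h3⟩
    refine ⟨cd x, ce x, cf x, ?_⟩
    rw [rep x, h1, h2, h3]
    rw [show !![(0:ℝ), 0, 0, cd x; 0, 0, 0, ce x; ce x, -cd x, 0, cf x; 0, 0, 0, 0]
        = m6 0 0 0 (cd x) (ce x) (cf x) by simp [m6]]
  · rintro ⟨d, e, f, h⟩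
    have h' : (x : Matrix (Fin 4) (Fin 4) ℝ) = m6 0 0 0 d e f := by
      rw [h]; simp [m6]
    refine ⟨?_, ?_, ?_⟩ <;> simp [ca, cb, cc, h']


noncomputable def TI : ↥Idef →ₗ[ℝ] (Fin 3 → ℝ) where
  toFun u := ![cd u.1, ce u.1, cf u.1]
  map_add' x y := by funext i; fin_cases i <;> simp
  map_smul' t x := by funext i; fin_cases i <;> simp

noncomputable def SI : (Fin 3 → ℝ) →ₗ[ℝ] ↥Idef where
  toFun v := ⟨⟨m6 0 0 0 (v 0) (v 1) (v 2), m6_mem _ _ _ _ _ _⟩, by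
    refine ⟨?_, ?_, ?_⟩ <;> simp [ca, cb, cc]⟩
  map_add' v w := by
    apply Subtype.ext; apply Subtype.ext
    show m6 0 0 0 ((v + w) 0) ((v + w) 1) ((v + w) 2)
      = m6 0 0 0 (v 0) (v 1) (v 2) + m6 0 0 0 (w 0) (w 1) (w 2)
    rw [m6_add]
    norm_num
  map_smul' t v := by
    apply Subtype.ext; apply Subtype.ext
    show m6 0 0 0 ((t • v) 0) ((t • v) 1) ((t • v) 2) = t • m6 0 0 0 (v 0) (v 1) (v 2)
    rw [m6_smul]
    norm_num

noncomputable def eqI : ↥Idef ≃ₗ[ℝ] (Fin 3 → ℝ) :=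
  LinearEquiv.ofLinear TI SI
    (by
      apply LinearMap.ext; intro v
      funext i
      fin_cases i <;> simp [TI, SI, cd, ce, cf])
    (by
      apply LinearMap.ext; intro u
      apply Subtype.ext; apply Subtype.ext
      obtain ⟨h1, h2, h3⟩ := u.2
      show m6 0 0 0 _ _ _ = ((u : ↥SL) : Matrix (Fin 4) (Fin 4) ℝ)
      simp only [TI, SI, LinearMap.coe_mk, AddHom.coe_mk, Matrix.cons_val_zero,
        Matrix.cons_val_one, Matrix.head_cons, Matrix.cons_val_two, Matrix.tail_cons]
      rw [rep u.1, h1, h2, h3])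

lemma Icoe_bracket (u v : ↥Idef) :
    ((⁅u, v⁆ : ↥Idef) : ↥SL) = ⁅(u : ↥SL), (v : ↥SL)⁆ := rfl

lemma finrank_Idef : Module.finrank ℝ ↥Idef = 3 := by
  rw [eqI.finrank_eq]; simp

lemma Icoords (u : ↥Idef) : ca u.1 = 0 ∧ cb u.1 = 0 ∧ cc u.1 = 0 := u.2

lemma tri (u v w : ↥Idef) : ⁅u, ⁅v, w⁆⁆ = 0 := by
  obtain ⟨hu1, hu2, hu3⟩ := Icoords u
  obtain ⟨hv1, hv2, hv3⟩ := Icoords v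
  obtain ⟨hw1, hw2, hw3⟩ := Icoords w
  have key : ((⁅u, ⁅v, w⁆⁆ : ↥Idef) : ↥SL) = 0 := by
    rw [Icoe_bracket, Icoe_bracket]
    apply coords_eq_zero <;>
      simp [ca_bracket, cb_bracket, cc_bracket, cd_bracket, ce_bracket, cf_bracket,
        hu1, hu2, hu3, hv1, hv2, hv3, hw1, hw2, hw3]
  exact Subtype.ext key

instance : Module.Finite ℝ ↥Idef := Module.Finite.equiv eqI.symm

lemma nilpotent_Idef : LieModule.IsNilpotent ↥Idef ↥Idef := by
  refine (LieAlgebra.isNilpotent_iff_forall (R := ℝ) (L := ↥Idef)).mpr ?_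
  intro x
  refine ⟨2, ?_⟩
  apply LinearMap.ext
  intro y
  have h2 : ((LieAlgebra.ad ℝ ↥Idef x ^ 2) y) = ⁅x, ⁅x, y⁆⁆ := by
    rw [pow_two, Module.End.mul_apply, LieAlgebra.ad_apply, LieAlgebra.ad_apply]
  rw [h2, tri x x y]
  rfl


noncomputable def zc : ↥Idef := ⟨⟨m6 0 0 0 0 0 1, m6_mem _ _ _ _ _ _⟩, by
  refine ⟨?_, ?_, ?_⟩ <;> simp [ca, cb, cc]⟩
noncomputable def yD : ↥Idef := ⟨⟨m6 0 0 0 1 0 0, m6_mem _ _ _ _ _ _⟩, by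
  refine ⟨?_, ?_, ?_⟩ <;> simp [ca, cb, cc]⟩
noncomputable def yE : ↥Idef := ⟨⟨m6 0 0 0 0 1 0, m6_mem _ _ _ _ _ _⟩, by
  refine ⟨?_, ?_, ?_⟩ <;> simp [ca, cb, cc]⟩

lemma zc_d : cd zc.1 = 0 := by simp [zc, cd]
lemma zc_e : ce zc.1 = 0 := by simp [zc, ce]
lemma zc_f : cf zc.1 = 1 := by simp [zc, cf]

lemma zc_mem_center : zc ∈ LieAlgebra.center ℝ ↥Idef := by
  rw [LieAlgebra.center, LieModule.mem_maxTrivSubmodule]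
  intro x
  apply Subtype.ext
  rw [Icoe_bracket]
  obtain ⟨h1, h2, h3⟩ := Icoords x
  obtain ⟨g1, g2, g3⟩ := Icoords zc
  apply coords_eq_zero <;>
    simp [ca_bracket, cb_bracket, cc_bracket, cd_bracket, ce_bracket, cf_bracket,
      h1, h2, h3, g1, g2, g3, zc_d, zc_e]

lemma center_coords (w : ↥Idef) (hw : w ∈ LieAlgebra.center ℝ ↥Idef) :
    cd w.1 = 0 ∧ ce w.1 = 0 := by
  rw [LieAlgebra.center, LieModule.mem_maxTrivSubmodule] at hw
  have hD := congrArg (fun t : ↥Idef => cf (t : ↥SL)) (hw yD)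
  have hE := congrArg (fun t : ↥Idef => cf (t : ↥SL)) (hw yE)
  simp only [Icoe_bracket] at hD hE
  rw [cf_bracket] at hD hE
  have hD1 : cd yD.1 = 1 := by simp [yD, cd]
  have hD2 : ce yD.1 = 0 := by simp [yD, ce]
  have hE1 : cd yE.1 = 0 := by simp [yE, cd]
  have hE2 : ce yE.1 = 1 := by simp [yE, ce]
  rw [hD1, hD2] at hD
  rw [hE1, hE2] at hE
  have h0 : cf ((0 : ↥Idef) : ↥SL) = 0 := by
    rw [show ((0 : ↥Idef) : ↥SL) = 0 from rfl]; simp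
  rw [h0] at hD hE
  constructor <;> linarith

noncomputable def TCc : ↥(LieAlgebra.center ℝ ↥Idef) →ₗ[ℝ] ℝ where
  toFun w := cf w.1.1
  map_add' w w' := by
    show cf (w.1.1 + w'.1.1) = cf w.1.1 + cf w'.1.1
    exact cf_add _ _
  map_smul' t w := by
    show cf (t • w.1.1) = t * cf w.1.1
    exact cf_smul _ _

noncomputable def SCc : ℝ →ₗ[ℝ] ↥(LieAlgebra.center ℝ ↥Idef) where
  toFun r := ⟨r • zc, (LieAlgebra.center ℝ ↥Idef).smul_mem r zc_mem_center⟩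
  map_add' r s := by apply Subtype.ext; show (r + s) • zc = r • zc + s • zc; rw [add_smul]
  map_smul' t r := by apply Subtype.ext; show (t * r) • zc = t • (r • zc); rw [mul_smul]

noncomputable def eqC : ↥(LieAlgebra.center ℝ ↥Idef) ≃ₗ[ℝ] ℝ :=
  LinearEquiv.ofLinear TCc SCc
    (by
      apply LinearMap.ext; intro r
      show cf ((r • zc : ↥Idef) : ↥SL) = r
      rw [show ((r • zc : ↥Idef) : ↥SL) = r • (zc : ↥SL) from rfl, cf_smul, zc_f, mul_one])
    (by
      apply LinearMap.ext; intro w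
      apply Subtype.ext; apply Subtype.ext; apply Subtype.ext
      show (((cf w.1.1 • zc : ↥Idef) : ↥SL) : Matrix (Fin 4) (Fin 4) ℝ) = ((w.1 : ↥SL) : Matrix (Fin 4) (Fin 4) ℝ)
      rw [show ((cf w.1.1 • zc : ↥Idef) : ↥SL) = cf w.1.1 • (zc : ↥SL) from rfl]
      obtain ⟨h1, h2, h3⟩ := Icoords w.1
      obtain ⟨h4, h5⟩ := center_coords w.1 w.2
      rw [show ((cf w.1.1 • (zc : ↥SL) : ↥SL) : Matrix (Fin 4) (Fin 4) ℝ)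
          = cf w.1.1 • ((zc : ↥SL) : Matrix (Fin 4) (Fin 4) ℝ) from rfl]
      rw [show ((zc.1 : ↥SL) : Matrix (Fin 4) (Fin 4) ℝ) = m6 0 0 0 0 0 1 from rfl]
      rw [m6_smul, rep w.1.1, h1, h2, h3, h4, h5]
      norm_num)

lemma finrank_center : Module.finrank ℝ ↥(LieAlgebra.center ℝ ↥Idef) = 1 := by
  rw [eqC.finrank_eq]; simp


noncomputable def EE : ↥SL := ⟨m6 0 1 0 0 0 0, m6_mem _ _ _ _ _ _⟩
noncomputable def FF : ↥SL := ⟨m6 0 0 1 0 0 0, m6_mem _ _ _ _ _ _⟩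

lemma EE_a : ca EE = 0 := by simp [EE, ca]
lemma EE_b : cb EE = 1 := by simp [EE, cb]
lemma EE_c : cc EE = 0 := by simp [EE, cc]
lemma FF_a : ca FF = 0 := by simp [FF, ca]
lemma FF_b : cb FF = 0 := by simp [FF, cb]
lemma FF_c : cc FF = 1 := by simp [FF, cc]

def good (P : LieIdeal ℝ ↥SL) : Prop :=
  ∃ x ∈ P, ¬ (ca x = 0 ∧ cb x = 0 ∧ cc x = 0)

lemma subB (P : LieIdeal ℝ ↥SL) (u : ↥SL) (hu : u ∈ P)
    (ha : ca u = 0) (hc : cc u = 0) (hb : cb u ≠ 0) : good ⁅P, P⁆ := by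
  have hw : ⁅FF, u⁆ ∈ P := P.lie_mem hu
  refine ⟨⁅u, ⁅FF, u⁆⁆, LieSubmodule.lie_mem_lie hu hw, ?_⟩
  rintro ⟨-, h2, -⟩
  rw [cb_bracket, ca_bracket, cb_bracket, FF_a, FF_b, FF_c, ha, hc] at h2
  ring_nf at h2
  nlinarith [sq_nonneg (cb u), mul_self_pos.mpr hb]

lemma subC (P : LieIdeal ℝ ↥SL) (u : ↥SL) (hu : u ∈ P)
    (ha : ca u = 0) (hb : cb u = 0) (hc : cc u ≠ 0) : good ⁅P, P⁆ := by
  have hw : ⁅EE, u⁆ ∈ P := P.lie_mem hu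
  refine ⟨⁅u, ⁅EE, u⁆⁆, LieSubmodule.lie_mem_lie hu hw, ?_⟩
  rintro ⟨-, -, h3⟩
  rw [cc_bracket, ca_bracket, cc_bracket, EE_a, EE_b, EE_c, ha, hb] at h3
  ring_nf at h3
  nlinarith [mul_self_pos.mpr hc]

lemma lemA (P : LieIdeal ℝ ↥SL) (h : good P) : good ⁅P, P⁆ := by
  obtain ⟨x, hxP, hx⟩ := h
  by_cases hc : cc x ≠ 0
  · -- u := ⁅EE, ⁅EE, x⁆⁆ has coords (0, -2 cc x, 0)
    have h1 : ⁅EE, x⁆ ∈ P := P.lie_mem hxP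
    have h2 : ⁅EE, ⁅EE, x⁆⁆ ∈ P := P.lie_mem h1
    apply subB P _ h2
    · rw [ca_bracket, cc_bracket, cb_bracket, EE_a, EE_b, EE_c]; ring
    · rw [cc_bracket, ca_bracket, cc_bracket, EE_a, EE_b, EE_c]; ring
    · rw [cb_bracket, ca_bracket, cb_bracket, EE_a, EE_b, EE_c]
      ring_nf
      simpa using hc
  · push_neg at hc
    by_cases hb : cb x ≠ 0
    · -- u := ⁅FF, ⁅FF, x⁆⁆ has coords (0, 0, -2 cb x)
      have h1 : ⁅FF, x⁆ ∈ P := P.lie_mem hxP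
      have h2 : ⁅FF, ⁅FF, x⁆⁆ ∈ P := P.lie_mem h1
      apply subC P _ h2
      · rw [ca_bracket, cc_bracket, cb_bracket, FF_a, FF_b, FF_c]; ring
      · rw [cb_bracket, ca_bracket, cb_bracket, FF_a, FF_b, FF_c]; ring
      · rw [cc_bracket, ca_bracket, cc_bracket, FF_a, FF_b, FF_c]
        ring_nf
        simpa using hb
    · push_neg at hb
      have ha : ca x ≠ 0 := by
        intro h0
        exact hx ⟨h0, hb, hc⟩
      -- u := ⁅EE, x⁆ has coords (cc x, -2 ca x, 0) = (0, -2 ca x, 0)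
      have h1 : ⁅EE, x⁆ ∈ P := P.lie_mem hxP
      apply subB P _ h1
      · rw [ca_bracket, EE_b, EE_c, hc]; ring
      · rw [cc_bracket, EE_a, EE_c]; ring
      · rw [cb_bracket, EE_a, EE_b]
        ring_nf
        simpa using ha


instance : Module.Finite ℝ ↥SL := Module.Finite.equiv eqS.symm
instance : IsNoetherian ℝ ↥SL := inferInstance

lemma solv_le (J : LieIdeal ℝ ↥SL) (hs : LieAlgebra.IsSolvable ↥J) : J ≤ Idef := by
  by_contra hn
  rw [SetLike.not_le_iff_exists] at hn
  obtain ⟨x, hxJ, hxI⟩ := hn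
  have hgood : good J := ⟨x, hxJ, fun h => hxI ((mem_Idef x).mpr h)⟩
  have hall : ∀ k, good (LieAlgebra.derivedSeriesOfIdeal ℝ ↥SL k J) := by
    intro k
    induction k with
    | zero => rw [LieAlgebra.derivedSeriesOfIdeal_zero]; exact hgood
    | succ k ih => rw [LieAlgebra.derivedSeriesOfIdeal_succ]; exact lemA _ ih
  obtain ⟨k, hk⟩ := LieAlgebra.IsSolvable.solvable ℝ ↥J
  rw [LieIdeal.derivedSeries_eq_bot_iff] at hk
  obtain ⟨y, hy, hy2⟩ := hall k
  rw [hk, LieSubmodule.mem_bot] at hy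
  subst hy
  exact hy2 ⟨ca_zero, cb_zero, cc_zero⟩

lemma Idef_radical : Idef = LieAlgebra.radical ℝ ↥SL := by
  haveI : LieModule.IsNilpotent ↥Idef ↥Idef := nilpotent_Idef
  refine le_antisymm ?_ ?_
  · exact (LieAlgebra.LieIdeal.solvable_iff_le_radical ℝ ↥SL Idef).mp inferInstance
  · exact solv_le _ inferInstance


/-- The 4×4 matrices `[[a, b, 0, d], [c, -a, 0, e], [e, -d, 0, f], [0, 0, 0, 0]]` form a
6-dimensional Lie subalgebra of `gl(4, ℝ)`; the subset with `a = b = c = 0` is a 3-dimensional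
nilpotent ideal with 1-dimensional center (the Heisenberg algebra), equal to the solvable
radical. -/
theorem L62_representation :
    ∃ S : LieSubalgebra ℝ (Matrix (Fin 4) (Fin 4) ℝ),
      (S : Set (Matrix (Fin 4) (Fin 4) ℝ)) =
        {M | ∃ a b c d e f : ℝ,
          M = !![a, b, 0, d; c, -a, 0, e; e, -d, 0, f; 0, 0, 0, 0]} ∧
      Module.finrank ℝ ↥S = 6 ∧
      ∃ I : LieIdeal ℝ ↥S,
        (∀ x : ↥S, x ∈ I ↔ ∃ d e f : ℝ,
          (x : Matrix (Fin 4) (Fin 4) ℝ) = !![0, 0, 0, d; 0, 0, 0, e; e, -d, 0, f; 0, 0, 0, 0]) ∧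
        Module.finrank ℝ ↥I = 3 ∧
        LieModule.IsNilpotent ↥I ↥I ∧
        Module.finrank ℝ ↥(LieAlgebra.center ℝ ↥I) = 1 ∧
        I = LieAlgebra.radical ℝ ↥S := by
  exact ⟨SL, rfl, finrank_SL, Idef, mem_Idef', finrank_Idef, nilpotent_Idef,
    finrank_center, Idef_radical⟩
end

section
/- For every λ ∈ ℝ, the set S_λ of real 3×3 matrices of the form [[a + λf, b, d],[−c, λf − a, e],[0, 0, (1+λ)f]] with a,b,c,d,e,f ∈ ℝ is a Lie subalgebra of gl(3,ℝ) of dimension 6 over ℝ, and the subset of such matrices with a = b = c = 0 is a 3-dimensional solvable Lie ideal of S_λ that equals the solvable radical of S_λ. -/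
attribute [local instance 100] LieRing.ofAssociativeRing

namespace L63

variable (l : ℝ)

@[simp] lemma cons6_five {α : Type*} (a b c d e f : α) : ![a,b,c,d,e,f] 5 = f := rfl

def Ssub : LieSubalgebra ℝ (Matrix (Fin 3) (Fin 3) ℝ) where
  carrier := {M | M 2 0 = 0 ∧ M 2 1 = 0 ∧ (1+l)*(M 0 0 + M 1 1) = 2*l*(M 2 2)}
  add_mem' := by
    rintro x y ⟨hx1, hx2, hx3⟩ ⟨hy1, hy2, hy3⟩
    refine ⟨by simp [hx1, hy1], by simp [hx2, hy2], ?_⟩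
    simp only [Matrix.add_apply]; linarith
  zero_mem' := by simp
  smul_mem' := by
    rintro t x ⟨hx1, hx2, hx3⟩
    refine ⟨by simp [hx1], by simp [hx2], ?_⟩
    simp only [Matrix.smul_apply, smul_eq_mul]; linear_combination t * hx3
  lie_mem' := by
    rintro x y ⟨hx1, hx2, hx3⟩ ⟨hy1, hy2, hy3⟩
    simp only [Set.mem_setOf_eq, Ring.lie_def, Matrix.sub_apply, Matrix.mul_apply,
      Fin.sum_univ_three, hx1, hx2, hy1, hy2]
    refine ⟨by ring, by ring, by ring⟩

lemma coe_smul (t : ℝ) (x : ↥(Ssub l)) :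
    ((t • x : ↥(Ssub l)) : Matrix (Fin 3) (Fin 3) ℝ) = t • x.val := rfl

lemma hS (x : ↥(Ssub l)) : x.val 2 0 = 0 ∧ x.val 2 1 = 0 ∧
    (1+l)*(x.val 0 0 + x.val 1 1) = 2*l*(x.val 2 2) := x.2

lemma brk_apply (x y : ↥(Ssub l)) (i j : Fin 3) :
    ((⁅x, y⁆ : ↥(Ssub l)) : Matrix (Fin 3) (Fin 3) ℝ) i j =
    x.val i 0 * y.val 0 j + x.val i 1 * y.val 1 j + x.val i 2 * y.val 2 j
      - (y.val i 0 * x.val 0 j + y.val i 1 * x.val 1 j + y.val i 2 * x.val 2 j) := by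
  have : ((⁅x, y⁆ : ↥(Ssub l)) : Matrix (Fin 3) (Fin 3) ℝ) = x.val * y.val - y.val * x.val := rfl
  rw [this]
  simp [Matrix.sub_apply, Matrix.mul_apply, Fin.sum_univ_three]

lemma Ssub_coe : ((Ssub l : LieSubalgebra ℝ (Matrix (Fin 3) (Fin 3) ℝ)) :
      Set (Matrix (Fin 3) (Fin 3) ℝ)) =
    {M | ∃ a b c d e f : ℝ,
      M = !![a + l * f, b, d; -c, l * f - a, e; 0, 0, (1 + l) * f]} := by
  ext M
  constructor
  · rintro ⟨h1, h2, h3⟩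
    refine ⟨(M 0 0 - M 1 1)/2, M 0 1, -(M 1 0), M 0 2, M 1 2,
      M 2 2 - (M 0 0 + M 1 1)/2, ?_⟩
    have hlf : l * (M 2 2 - (M 0 0 + M 1 1)/2) = (M 0 0 + M 1 1)/2 := by linarith
    ext i j
    fin_cases i <;> fin_cases j <;> simp <;> linarith
  · rintro ⟨a, b, c, d, e, f, rfl⟩
    refine ⟨by simp, by simp, by simp; ring⟩

def ψmat (v : Fin 6 → ℝ) : Matrix (Fin 3) (Fin 3) ℝ :=
  !![v 0 + l * v 5, v 1, v 3; -(v 2), l * v 5 - v 0, v 4; 0, 0, (1+l) * v 5]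

lemma ψmat_mem (v : Fin 6 → ℝ) : ψmat l v ∈ Ssub l :=
  ⟨by simp [ψmat], by simp [ψmat], by simp [ψmat]; ring⟩

noncomputable def eS : (Fin 6 → ℝ) ≃ₗ[ℝ] ↥(Ssub l) where
  toFun v := ⟨ψmat l v, ψmat_mem l v⟩
  map_add' v w := by
    apply Subtype.ext
    show ψmat l (v + w) = ψmat l v + ψmat l w
    ext i j; fin_cases i <;> fin_cases j <;> simp [ψmat] <;> ring
  map_smul' t v := by
    apply Subtype.ext
    show ψmat l (t • v) = t • ψmat l v
    ext i j; fin_cases i <;> fin_cases j <;> simp [ψmat] <;> ring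
  invFun x := ![(x.val 0 0 - x.val 1 1)/2, x.val 0 1, -(x.val 1 0), x.val 0 2, x.val 1 2,
    x.val 2 2 - (x.val 0 0 + x.val 1 1)/2]
  left_inv v := by
    funext i; fin_cases i <;> simp [ψmat] <;> ring
  right_inv x := by
    obtain ⟨h1, h2, h3⟩ := x.2
    apply Subtype.ext
    show ψmat l _ = x.val
    ext i j; fin_cases i <;> fin_cases j <;> simp [ψmat] <;> linarith

lemma finrank_Ssub : Module.finrank ℝ ↥(Ssub l) = 6 := by
  rw [← (eS l).finrank_eq]; simp

def Iid : LieIdeal ℝ ↥(Ssub l) where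
  carrier := {x : ↥(Ssub l) | x.val 0 0 = x.val 1 1 ∧ x.val 0 1 = 0 ∧ x.val 1 0 = 0}
  add_mem' := by
    rintro x y ⟨hx1, hx2, hx3⟩ ⟨hy1, hy2, hy3⟩
    refine ⟨?_, ?_, ?_⟩ <;>
      simp only [AddMemClass.coe_add, Matrix.add_apply] <;> linarith
  zero_mem' := by refine ⟨?_, ?_, ?_⟩ <;> simp
  smul_mem' := by
    rintro t x ⟨hx1, hx2, hx3⟩
    refine ⟨?_, ?_, ?_⟩ <;> simp only [coe_smul, Matrix.smul_apply, smul_eq_mul] <;>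
      simp [hx1, hx2, hx3]
  lie_mem := by
    rintro y x ⟨hx1, hx2, hx3⟩
    obtain ⟨hy20, hy21, -⟩ := hS l y
    obtain ⟨hx20, hx21, -⟩ := hS l x
    refine ⟨?_, ?_, ?_⟩ <;>
      simp only [Set.mem_setOf_eq, brk_apply, hx1, hx2, hx3, hx20, hx21, hy20, hy21] <;> ring

lemma mem_Iid' (x : ↥(Ssub l)) : x ∈ Iid l ↔
    (x.val 0 0 = x.val 1 1 ∧ x.val 0 1 = 0 ∧ x.val 1 0 = 0) := Iff.rfl

lemma mem_Iid (x : ↥(Ssub l)) : x ∈ Iid l ↔ ∃ d e f : ℝ,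
    (x : Matrix (Fin 3) (Fin 3) ℝ) = !![l * f, 0, d; 0, l * f, e; 0, 0, (1 + l) * f] := by
  constructor
  · rintro ⟨hx1, hx2, hx3⟩
    obtain ⟨hx20, hx21, hx3'⟩ := hS l x
    refine ⟨x.val 0 2, x.val 1 2, x.val 2 2 - x.val 0 0, ?_⟩
    have e1 : x.val 0 0 + x.val 1 1 + l * x.val 0 0 + l * x.val 1 1 - 2*(l * x.val 2 2) = 0 := by
      linear_combination hx3'
    have e2 : l * x.val 0 0 = l * x.val 1 1 := by linear_combination l * hx1
    ext i j
    fin_cases i <;> fin_cases j <;>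
      simp [hx1, hx2, hx3, hx20, hx21, Matrix.vecHead, Matrix.vecTail] <;>
      linarith [e1, e2, hx1]
  · rintro ⟨d, e, f, hx⟩
    refine ⟨?_, ?_, ?_⟩ <;> simp [hx]

def ζmat (v : Fin 3 → ℝ) : Matrix (Fin 3) (Fin 3) ℝ :=
  !![l * v 2, 0, v 0; 0, l * v 2, v 1; 0, 0, (1+l) * v 2]

lemma ζmat_memS (v : Fin 3 → ℝ) : ζmat l v ∈ Ssub l :=
  ⟨by simp [ζmat, Matrix.vecHead, Matrix.vecTail],
   by simp [ζmat, Matrix.vecHead, Matrix.vecTail],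
   by simp [ζmat, Matrix.vecHead, Matrix.vecTail]; ring⟩

lemma ζmat_memI (v : Fin 3 → ℝ) : (⟨ζmat l v, ζmat_memS l v⟩ : ↥(Ssub l)) ∈ Iid l :=
  ⟨by simp [ζmat, Matrix.vecHead, Matrix.vecTail],
   by simp [ζmat, Matrix.vecHead, Matrix.vecTail],
   by simp [ζmat, Matrix.vecHead, Matrix.vecTail]⟩

noncomputable def eI : (Fin 3 → ℝ) ≃ₗ[ℝ] ↥(Iid l) where
  toFun v := ⟨⟨ζmat l v, ζmat_memS l v⟩, ζmat_memI l v⟩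
  map_add' v w := by
    apply Subtype.ext; apply Subtype.ext
    show ζmat l (v + w) = ζmat l v + ζmat l w
    ext i j; fin_cases i <;> fin_cases j <;> simp [ζmat, Matrix.vecHead, Matrix.vecTail] <;> ring
  map_smul' t v := by
    apply Subtype.ext; apply Subtype.ext
    show ζmat l (t • v) = t • ζmat l v
    ext i j; fin_cases i <;> fin_cases j <;> simp [ζmat, Matrix.vecHead, Matrix.vecTail] <;> ring
  invFun x := ![x.val.val 0 2, x.val.val 1 2, x.val.val 2 2 - x.val.val 0 0]
  left_inv v := by
    funext i; fin_cases i <;> simp [ζmat, Matrix.vecHead, Matrix.vecTail] <;> ring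
  right_inv x := by
    obtain ⟨hx1, hx2, hx3⟩ := x.2
    obtain ⟨hx20, hx21, hx3'⟩ := hS l x.val
    apply Subtype.ext; apply Subtype.ext
    show ζmat l _ = x.val.val
    have e1 : x.val.val 0 0 + x.val.val 1 1 + l * x.val.val 0 0 + l * x.val.val 1 1
        - 2*(l * x.val.val 2 2) = 0 := by linear_combination hx3'
    have e2 : l * x.val.val 0 0 = l * x.val.val 1 1 := by linear_combination l * hx1
    ext i j
    fin_cases i <;> fin_cases j <;>
      simp [ζmat, hx1, hx2, hx3, hx20, hx21, Matrix.vecHead, Matrix.vecTail] <;>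
      linarith [e1, e2, hx1]

lemma finrank_Iid : Module.finrank ℝ ↥(Iid l) = 3 := by
  rw [← (eI l).finrank_eq]; simp

def Nid : LieIdeal ℝ ↥(Ssub l) where
  carrier := {x : ↥(Ssub l) | x.val 0 0 = 0 ∧ x.val 1 1 = 0 ∧ x.val 0 1 = 0 ∧
    x.val 1 0 = 0 ∧ x.val 2 2 = 0}
  add_mem' := by
    rintro x y ⟨hx1, hx2, hx3, hx4, hx5⟩ ⟨hy1, hy2, hy3, hy4, hy5⟩
    refine ⟨?_, ?_, ?_, ?_, ?_⟩ <;> simp only [AddMemClass.coe_add, Matrix.add_apply] <;> linarith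
  zero_mem' := by refine ⟨?_, ?_, ?_, ?_, ?_⟩ <;> simp
  smul_mem' := by
    rintro t x ⟨hx1, hx2, hx3, hx4, hx5⟩
    refine ⟨?_, ?_, ?_, ?_, ?_⟩ <;> simp only [coe_smul, Matrix.smul_apply, smul_eq_mul] <;>
      simp [hx1, hx2, hx3, hx4, hx5]
  lie_mem := by
    rintro y x ⟨hx1, hx2, hx3, hx4, hx5⟩
    obtain ⟨hy20, hy21, -⟩ := hS l y
    obtain ⟨hx20, hx21, -⟩ := hS l x
    refine ⟨?_, ?_, ?_, ?_, ?_⟩ <;>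
      simp only [Set.mem_setOf_eq, brk_apply, hx1, hx2, hx3, hx4, hx5, hx20, hx21,
        hy20, hy21] <;> ring

lemma Iid_solvable : LieAlgebra.IsSolvable ↥(Iid l) := by
  rw [LieAlgebra.isSolvable_iff ℝ]
  refine ⟨2, ?_⟩
  rw [LieIdeal.derivedSeries_eq_bot_iff]
  have h1 : LieAlgebra.derivedSeriesOfIdeal ℝ ↥(Ssub l) 1 (Iid l) ≤ Nid l := by
    rw [show (1:ℕ) = 0+1 from rfl, LieAlgebra.derivedSeriesOfIdeal_succ,
      LieAlgebra.derivedSeriesOfIdeal_zero, LieSubmodule.lie_le_iff]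
    rintro x ⟨hx1, hx2, hx3⟩ y ⟨hy1, hy2, hy3⟩
    obtain ⟨hx20, hx21, -⟩ := hS l x
    obtain ⟨hy20, hy21, -⟩ := hS l y
    refine ⟨?_, ?_, ?_, ?_, ?_⟩ <;>
      simp only [Set.mem_setOf_eq, brk_apply, hx1, hx2, hx3, hx20, hx21,
        hy1, hy2, hy3, hy20, hy21] <;> ring
  have h3 : ⁅Nid l, Nid l⁆ = (⊥ : LieIdeal ℝ ↥(Ssub l)) := by
    rw [LieSubmodule.lie_eq_bot_iff]
    rintro x ⟨hx1, hx2, hx3, hx4, hx5⟩ y ⟨hy1, hy2, hy3, hy4, hy5⟩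
    obtain ⟨hx20, hx21, -⟩ := hS l x
    obtain ⟨hy20, hy21, -⟩ := hS l y
    apply Subtype.ext
    ext i j
    have h0 : ((0 : ↥(Ssub l)) : Matrix (Fin 3) (Fin 3) ℝ) i j = 0 := by simp
    rw [h0, brk_apply]
    fin_cases i <;> fin_cases j <;>
      simp [hx1, hx2, hx3, hx4, hx5, hx20, hx21, hy1, hy2, hy3, hy4, hy5, hy20, hy21]
  have h2 : LieAlgebra.derivedSeriesOfIdeal ℝ ↥(Ssub l) 2 (Iid l) ≤ ⊥ := by
    rw [show (2:ℕ) = 1+1 from rfl, LieAlgebra.derivedSeriesOfIdeal_succ, ← h3]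
    exact LieSubmodule.mono_lie h1 h1
  exact le_bot_iff.mp h2

def Eel : ↥(Ssub l) :=
  ⟨!![0,1,0;0,0,0;0,0,0], by
    refine ⟨by simp [Matrix.vecHead, Matrix.vecTail], by simp [Matrix.vecHead, Matrix.vecTail],
      by simp [Matrix.vecHead, Matrix.vecTail]⟩⟩

def Fel : ↥(Ssub l) :=
  ⟨!![0,0,0;1,0,0;0,0,0], by
    refine ⟨by simp [Matrix.vecHead, Matrix.vecTail], by simp [Matrix.vecHead, Matrix.vecTail],
      by simp [Matrix.vecHead, Matrix.vecTail]⟩⟩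

lemma brE (x : ↥(Ssub l)) :
    (⁅Eel l, x⁆ : ↥(Ssub l)).val 0 0 - (⁅Eel l, x⁆ : ↥(Ssub l)).val 1 1 = 2 * x.val 1 0 ∧
    (⁅Eel l, x⁆ : ↥(Ssub l)).val 0 1 = -(x.val 0 0 - x.val 1 1) ∧
    (⁅Eel l, x⁆ : ↥(Ssub l)).val 1 0 = 0 := by
  obtain ⟨h20, h21, -⟩ := hS l x
  refine ⟨?_, ?_, ?_⟩ <;>
    simp [brk_apply, Eel, h20, h21, Matrix.vecHead, Matrix.vecTail] <;> ring

lemma brF (x : ↥(Ssub l)) :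
    (⁅Fel l, x⁆ : ↥(Ssub l)).val 0 0 - (⁅Fel l, x⁆ : ↥(Ssub l)).val 1 1 = -2 * x.val 0 1 ∧
    (⁅Fel l, x⁆ : ↥(Ssub l)).val 0 1 = 0 ∧
    (⁅Fel l, x⁆ : ↥(Ssub l)).val 1 0 = x.val 0 0 - x.val 1 1 := by
  obtain ⟨h20, h21, -⟩ := hS l x
  refine ⟨?_, ?_, ?_⟩ <;>
    simp [brk_apply, Fel, h20, h21, Matrix.vecHead, Matrix.vecTail] <;> ring

lemma brA (z u : ↥(Ssub l)) :
    (⁅z, u⁆ : ↥(Ssub l)).val 0 0 - (⁅z, u⁆ : ↥(Ssub l)).val 1 1 =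
    2 * (z.val 0 1 * u.val 1 0 - z.val 1 0 * u.val 0 1) := by
  obtain ⟨hz20, hz21, -⟩ := hS l z
  obtain ⟨hu20, hu21, -⟩ := hS l u
  simp [brk_apply, hz20, hz21, hu20, hu21]; ring

lemma key (D : LieIdeal ℝ ↥(Ssub l)) (h : ¬ D ≤ Iid l) : ¬ ⁅D, D⁆ ≤ Iid l := by
  obtain ⟨x, hxD, hxI⟩ := SetLike.not_le_iff_exists.mp h
  have step1 : ∃ z, z ∈ D ∧ z.val 0 0 = z.val 1 1 ∧ z.val 1 0 = 0 ∧ z.val 0 1 ≠ 0 := by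
    by_cases hc : x.val 1 0 = 0
    · by_cases ha : x.val 0 0 = x.val 1 1
      · have hb : x.val 0 1 ≠ 0 := fun hb => hxI ⟨ha, hb, hc⟩
        exact ⟨x, hxD, ha, hc, hb⟩
      · refine ⟨⁅Eel l, x⁆, D.lie_mem hxD, ?_, (brE l x).2.2, ?_⟩
        · have := (brE l x).1; rw [hc] at this; linarith only [this]
        · rw [(brE l x).2.1]; intro hcon; apply ha; linarith only [neg_eq_zero.mp hcon]
    · set x1 := (⁅Eel l, x⁆ : ↥(Ssub l)) with hx1def
      have hx1D : x1 ∈ D := D.lie_mem hxD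
      have hA1 : x1.val 0 0 - x1.val 1 1 = 2 * x.val 1 0 := (brE l x).1
      have hC1 : x1.val 1 0 = 0 := (brE l x).2.2
      refine ⟨⁅Eel l, x1⁆, D.lie_mem hx1D, ?_, (brE l x1).2.2, ?_⟩
      · have := (brE l x1).1; rw [hC1] at this; linarith only [this]
      · rw [(brE l x1).2.1]; intro hcon
        have h0 : x1.val 0 0 - x1.val 1 1 = 0 := by linarith only [neg_eq_zero.mp hcon]
        rw [hA1] at h0; exact hc (by linarith only [h0])
  obtain ⟨z, hzD, hzA, hzC, hzB⟩ := step1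
  set w := (⁅Fel l, z⁆ : ↥(Ssub l)) with hwdef
  have hwD : w ∈ D := D.lie_mem hzD
  have hwA : w.val 0 0 - w.val 1 1 = -2 * z.val 0 1 := (brF l z).1
  have hwB : w.val 0 1 = 0 := (brF l z).2.1
  set u := (⁅Fel l, w⁆ : ↥(Ssub l)) with hudef
  have huD : u ∈ D := D.lie_mem hwD
  have huC : u.val 1 0 = w.val 0 0 - w.val 1 1 := (brF l w).2.2
  have huB : u.val 0 1 = 0 := (brF l w).2.1
  intro hle
  have hv : (⁅z, u⁆ : ↥(Ssub l)) ∈ ⁅D, D⁆ := LieSubmodule.lie_mem_lie hzD huD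
  have hvI := hle hv
  rw [mem_Iid'] at hvI
  have hvA := brA l z u
  rw [hvI.1, huC, hwA, hzC] at hvA
  have hzz : z.val 0 1 * (-2 * z.val 0 1) = 0 := by linarith only [hvA]
  rcases mul_eq_zero.mp hzz with h' | h'
  · exact hzB h'
  · apply hzB; linarith only [h']

lemma derived_not_le (J : LieIdeal ℝ ↥(Ssub l)) (h : ¬ J ≤ Iid l) (k : ℕ) :
    ¬ LieAlgebra.derivedSeriesOfIdeal ℝ ↥(Ssub l) k J ≤ Iid l := by
  induction k with
  | zero => rwa [LieAlgebra.derivedSeriesOfIdeal_zero]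
  | succ k ih => rw [LieAlgebra.derivedSeriesOfIdeal_succ]; exact key l _ ih

lemma radical_eq : Iid l = LieAlgebra.radical ℝ ↥(Ssub l) := by
  apply le_antisymm
  · exact le_sSup (Iid_solvable l)
  · apply sSup_le
    intro J hJ
    by_contra h
    obtain ⟨k, hk⟩ := (LieAlgebra.isSolvable_iff ℝ _).mp hJ
    rw [LieIdeal.derivedSeries_eq_bot_iff] at hk
    exact derived_not_le l J h k (by rw [hk]; exact bot_le)

end L63

/-- For every `λ ∈ ℝ`, the 3×3 matrices `[[a + λf, b, d], [-c, λf - a, e], [0, 0, (1+λ)f]]`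
form a 6-dimensional Lie subalgebra of `gl(3, ℝ)`, and the subset with `a = b = c = 0` is a
3-dimensional solvable ideal equal to the solvable radical. -/
theorem L63_representation (l : ℝ) :
    ∃ S : LieSubalgebra ℝ (Matrix (Fin 3) (Fin 3) ℝ),
      (S : Set (Matrix (Fin 3) (Fin 3) ℝ)) =
        {M | ∃ a b c d e f : ℝ,
          M = !![a + l * f, b, d; -c, l * f - a, e; 0, 0, (1 + l) * f]} ∧
      Module.finrank ℝ ↥S = 6 ∧
      ∃ I : LieIdeal ℝ ↥S,
        (∀ x : ↥S, x ∈ I ↔ ∃ d e f : ℝ,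
          (x : Matrix (Fin 3) (Fin 3) ℝ) = !![l * f, 0, d; 0, l * f, e; 0, 0, (1 + l) * f]) ∧
        Module.finrank ℝ ↥I = 3 ∧
        LieAlgebra.IsSolvable ↥I ∧
        I = LieAlgebra.radical ℝ ↥S := by
  exact ⟨L63.Ssub l, L63.Ssub_coe l, L63.finrank_Ssub l, L63.Iid l, L63.mem_Iid l,
    L63.finrank_Iid l, L63.Iid_solvable l, L63.radical_eq l⟩
end

section
/- The set S of real 4×4 matrices of the form [[a, b, 0, d],[c, −a, 0, e],[f, g, 0, h],[0, 0, 0, 0]] with a,b,c,d,e,f,g,h ∈ ℝ is a Lie subalgebra of gl(4,ℝ) of dimension 8 over ℝ, and the subset I of such matrices with a = b = c = 0 is a 5-dimensional nilpotent Lie ideal of S whose center is 1-dimensional (I is the 5-dimensional Heisenberg algebra) and which equals the solvable radical of S. (This realizes Turkowski's algebra L_{8.13} with ε = −1 by 4×4 matrices.) -/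
attribute [local instance 100] LieRing.ofAssociativeRing

namespace L813

def Smat (a b c d e f g h : ℝ) : Matrix (Fin 4) (Fin 4) ℝ :=
  !![a, b, 0, d; c, -a, 0, e; f, g, 0, h; 0, 0, 0, 0]

@[simp] lemma Smat00 (a b c d e f g h : ℝ) : Smat a b c d e f g h 0 0 = a := rfl
@[simp] lemma Smat01 (a b c d e f g h : ℝ) : Smat a b c d e f g h 0 1 = b := rfl
@[simp] lemma Smat10 (a b c d e f g h : ℝ) : Smat a b c d e f g h 1 0 = c := rfl
@[simp] lemma Smat03 (a b c d e f g h : ℝ) : Smat a b c d e f g h 0 3 = d := rfl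
@[simp] lemma Smat13 (a b c d e f g h : ℝ) : Smat a b c d e f g h 1 3 = e := rfl
@[simp] lemma Smat20 (a b c d e f g h : ℝ) : Smat a b c d e f g h 2 0 = f := rfl
@[simp] lemma Smat21 (a b c d e f g h : ℝ) : Smat a b c d e f g h 2 1 = g := rfl
@[simp] lemma Smat23 (a b c d e f g h : ℝ) : Smat a b c d e f g h 2 3 = h := rfl

set_option maxHeartbeats 1000000 in
lemma Smat_add (a b c d e f g h a' b' c' d' e' f' g' h' : ℝ) :
    Smat a b c d e f g h + Smat a' b' c' d' e' f' g' h' =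
      Smat (a+a') (b+b') (c+c') (d+d') (e+e') (f+f') (g+g') (h+h') := by
  ext i j
  fin_cases i <;> fin_cases j <;>
    simp [Smat, Matrix.vecHead, Matrix.vecTail] <;> ring

set_option maxHeartbeats 1000000 in
lemma Smat_smul (r a b c d e f g h : ℝ) :
    r • Smat a b c d e f g h = Smat (r*a) (r*b) (r*c) (r*d) (r*e) (r*f) (r*g) (r*h) := by
  ext i j
  fin_cases i <;> fin_cases j <;>
    simp [Smat, Matrix.vecHead, Matrix.vecTail] <;> ring

set_option maxHeartbeats 1000000 in
lemma Smat_bracket (a b c d e f g h a' b' c' d' e' f' g' h' : ℝ) :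
    ⁅Smat a b c d e f g h, Smat a' b' c' d' e' f' g' h'⁆ =
      Smat (b*c' - b'*c) (2*(a*b' - a'*b)) (2*(a'*c - a*c'))
        (a*d' + b*e' - (a'*d + b'*e)) (c*d' - a*e' - (c'*d - a'*e))
        (f*a' + g*c' - (f'*a + g'*c)) (f*b' - g*a' - (f'*b - g'*a))
        (f*d' + g*e' - (f'*d + g'*e)) := by
  rw [Ring.lie_def]
  ext i j
  fin_cases i <;> fin_cases j <;>
    simp [Smat, Matrix.mul_apply, Fin.sum_univ_four, Matrix.vecHead, Matrix.vecTail] <;> ring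

lemma Smat_zero : Smat 0 0 0 0 0 0 0 0 = 0 := by
  ext i j; fin_cases i <;> fin_cases j <;> simp [Smat, Matrix.vecHead, Matrix.vecTail]

def S : LieSubalgebra ℝ (Matrix (Fin 4) (Fin 4) ℝ) where
  carrier := {M | ∃ a b c d e f g h : ℝ,
    M = !![a, b, 0, d; c, -a, 0, e; f, g, 0, h; 0, 0, 0, 0]}
  add_mem' := by
    rintro _ _ ⟨a,b,c,d,e,f,g,h,rfl⟩ ⟨a',b',c',d',e',f',g',h',rfl⟩
    exact ⟨a+a', b+b', c+c', d+d', e+e', f+f', g+g', h+h', Smat_add ..⟩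
  zero_mem' := ⟨0,0,0,0,0,0,0,0, Smat_zero.symm⟩
  smul_mem' := by
    rintro r _ ⟨a,b,c,d,e,f,g,h,rfl⟩
    exact ⟨r*a, r*b, r*c, r*d, r*e, r*f, r*g, r*h, Smat_smul ..⟩
  lie_mem' := by
    rintro _ _ ⟨a,b,c,d,e,f,g,h,rfl⟩ ⟨a',b',c',d',e',f',g',h',rfl⟩
    exact ⟨_, _, _, _, _, _, _, _, Smat_bracket ..⟩

def mk (a b c d e f g h : ℝ) : ↥S := ⟨Smat a b c d e f g h, ⟨a,b,c,d,e,f,g,h, rfl⟩⟩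

@[simp] lemma mk00 (a b c d e f g h : ℝ) :
    ((mk a b c d e f g h : ↥S) : Matrix (Fin 4) (Fin 4) ℝ) 0 0 = a := rfl
@[simp] lemma mk01 (a b c d e f g h : ℝ) :
    ((mk a b c d e f g h : ↥S) : Matrix (Fin 4) (Fin 4) ℝ) 0 1 = b := rfl
@[simp] lemma mk10 (a b c d e f g h : ℝ) :
    ((mk a b c d e f g h : ↥S) : Matrix (Fin 4) (Fin 4) ℝ) 1 0 = c := rfl
@[simp] lemma mk03 (a b c d e f g h : ℝ) :
    ((mk a b c d e f g h : ↥S) : Matrix (Fin 4) (Fin 4) ℝ) 0 3 = d := rfl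
@[simp] lemma mk13 (a b c d e f g h : ℝ) :
    ((mk a b c d e f g h : ↥S) : Matrix (Fin 4) (Fin 4) ℝ) 1 3 = e := rfl
@[simp] lemma mk20 (a b c d e f g h : ℝ) :
    ((mk a b c d e f g h : ↥S) : Matrix (Fin 4) (Fin 4) ℝ) 2 0 = f := rfl
@[simp] lemma mk21 (a b c d e f g h : ℝ) :
    ((mk a b c d e f g h : ↥S) : Matrix (Fin 4) (Fin 4) ℝ) 2 1 = g := rfl
@[simp] lemma mk23 (a b c d e f g h : ℝ) :
    ((mk a b c d e f g h : ↥S) : Matrix (Fin 4) (Fin 4) ℝ) 2 3 = h := rfl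

lemma coords (x : ↥S) : x = mk ((x : Matrix (Fin 4) (Fin 4) ℝ) 0 0)
    ((x : Matrix (Fin 4) (Fin 4) ℝ) 0 1) ((x : Matrix (Fin 4) (Fin 4) ℝ) 1 0)
    ((x : Matrix (Fin 4) (Fin 4) ℝ) 0 3) ((x : Matrix (Fin 4) (Fin 4) ℝ) 1 3)
    ((x : Matrix (Fin 4) (Fin 4) ℝ) 2 0) ((x : Matrix (Fin 4) (Fin 4) ℝ) 2 1)
    ((x : Matrix (Fin 4) (Fin 4) ℝ) 2 3) := by
  obtain ⟨M, a,b,c,d,e,f,g,h, rfl⟩ := x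
  rfl

lemma mk_bracket (a b c d e f g h a' b' c' d' e' f' g' h' : ℝ) :
    ⁅mk a b c d e f g h, mk a' b' c' d' e' f' g' h'⁆ =
      mk (b*c' - b'*c) (2*(a*b' - a'*b)) (2*(a'*c - a*c'))
        (a*d' + b*e' - (a'*d + b'*e)) (c*d' - a*e' - (c'*d - a'*e))
        (f*a' + g*c' - (f'*a + g'*c)) (f*b' - g*a' - (f'*b - g'*a))
        (f*d' + g*e' - (f'*d + g'*e)) :=
  Subtype.ext (Smat_bracket ..)

lemma mk_add (a b c d e f g h a' b' c' d' e' f' g' h' : ℝ) :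
    mk a b c d e f g h + mk a' b' c' d' e' f' g' h' =
      mk (a+a') (b+b') (c+c') (d+d') (e+e') (f+f') (g+g') (h+h') :=
  Subtype.ext (Smat_add ..)

lemma mk_smul (r a b c d e f g h : ℝ) :
    r • mk a b c d e f g h = mk (r*a) (r*b) (r*c) (r*d) (r*e) (r*f) (r*g) (r*h) :=
  Subtype.ext (Smat_smul ..)

lemma mk_zero : mk 0 0 0 0 0 0 0 0 = 0 := Subtype.ext Smat_zero

lemma mk_inj {a b c d e f g h a' b' c' d' e' f' g' h' : ℝ}
    (H : mk a b c d e f g h = mk a' b' c' d' e' f' g' h') :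
    a = a' ∧ b = b' ∧ c = c' ∧ d = d' ∧ e = e' ∧ f = f' ∧ g = g' ∧ h = h' := by
  have hM : Smat a b c d e f g h = Smat a' b' c' d' e' f' g' h' := congrArg Subtype.val H
  exact ⟨congrFun (congrFun hM 0) 0, congrFun (congrFun hM 0) 1, congrFun (congrFun hM 1) 0,
    congrFun (congrFun hM 0) 3, congrFun (congrFun hM 1) 3, congrFun (congrFun hM 2) 0,
    congrFun (congrFun hM 2) 1, congrFun (congrFun hM 2) 3⟩

lemma bracket_coords (x y : ↥S) : ⁅x, y⁆ = mk
    ((x : Matrix (Fin 4) (Fin 4) ℝ) 0 1 * (y : Matrix (Fin 4) (Fin 4) ℝ) 1 0 -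
      (y : Matrix (Fin 4) (Fin 4) ℝ) 0 1 * (x : Matrix (Fin 4) (Fin 4) ℝ) 1 0)
    (2*((x : Matrix (Fin 4) (Fin 4) ℝ) 0 0 * (y : Matrix (Fin 4) (Fin 4) ℝ) 0 1 -
      (y : Matrix (Fin 4) (Fin 4) ℝ) 0 0 * (x : Matrix (Fin 4) (Fin 4) ℝ) 0 1))
    (2*((y : Matrix (Fin 4) (Fin 4) ℝ) 0 0 * (x : Matrix (Fin 4) (Fin 4) ℝ) 1 0 -
      (x : Matrix (Fin 4) (Fin 4) ℝ) 0 0 * (y : Matrix (Fin 4) (Fin 4) ℝ) 1 0))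
    ((x : Matrix (Fin 4) (Fin 4) ℝ) 0 0 * (y : Matrix (Fin 4) (Fin 4) ℝ) 0 3 +
      (x : Matrix (Fin 4) (Fin 4) ℝ) 0 1 * (y : Matrix (Fin 4) (Fin 4) ℝ) 1 3 -
      ((y : Matrix (Fin 4) (Fin 4) ℝ) 0 0 * (x : Matrix (Fin 4) (Fin 4) ℝ) 0 3 +
      (y : Matrix (Fin 4) (Fin 4) ℝ) 0 1 * (x : Matrix (Fin 4) (Fin 4) ℝ) 1 3))
    ((x : Matrix (Fin 4) (Fin 4) ℝ) 1 0 * (y : Matrix (Fin 4) (Fin 4) ℝ) 0 3 -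
      (x : Matrix (Fin 4) (Fin 4) ℝ) 0 0 * (y : Matrix (Fin 4) (Fin 4) ℝ) 1 3 -
      ((y : Matrix (Fin 4) (Fin 4) ℝ) 1 0 * (x : Matrix (Fin 4) (Fin 4) ℝ) 0 3 -
      (y : Matrix (Fin 4) (Fin 4) ℝ) 0 0 * (x : Matrix (Fin 4) (Fin 4) ℝ) 1 3))
    ((x : Matrix (Fin 4) (Fin 4) ℝ) 2 0 * (y : Matrix (Fin 4) (Fin 4) ℝ) 0 0 +
      (x : Matrix (Fin 4) (Fin 4) ℝ) 2 1 * (y : Matrix (Fin 4) (Fin 4) ℝ) 1 0 -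
      ((y : Matrix (Fin 4) (Fin 4) ℝ) 2 0 * (x : Matrix (Fin 4) (Fin 4) ℝ) 0 0 +
      (y : Matrix (Fin 4) (Fin 4) ℝ) 2 1 * (x : Matrix (Fin 4) (Fin 4) ℝ) 1 0))
    ((x : Matrix (Fin 4) (Fin 4) ℝ) 2 0 * (y : Matrix (Fin 4) (Fin 4) ℝ) 0 1 -
      (x : Matrix (Fin 4) (Fin 4) ℝ) 2 1 * (y : Matrix (Fin 4) (Fin 4) ℝ) 0 0 -
      ((y : Matrix (Fin 4) (Fin 4) ℝ) 2 0 * (x : Matrix (Fin 4) (Fin 4) ℝ) 0 1 -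
      (y : Matrix (Fin 4) (Fin 4) ℝ) 2 1 * (x : Matrix (Fin 4) (Fin 4) ℝ) 0 0))
    ((x : Matrix (Fin 4) (Fin 4) ℝ) 2 0 * (y : Matrix (Fin 4) (Fin 4) ℝ) 0 3 +
      (x : Matrix (Fin 4) (Fin 4) ℝ) 2 1 * (y : Matrix (Fin 4) (Fin 4) ℝ) 1 3 -
      ((y : Matrix (Fin 4) (Fin 4) ℝ) 2 0 * (x : Matrix (Fin 4) (Fin 4) ℝ) 0 3 +
      (y : Matrix (Fin 4) (Fin 4) ℝ) 2 1 * (x : Matrix (Fin 4) (Fin 4) ℝ) 1 3)) := by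
  conv_lhs => rw [coords x, coords y]
  rw [mk_bracket]

def φS : (Fin 8 → ℝ) →ₗ[ℝ] ↥S where
  toFun v := mk (v 0) (v 1) (v 2) (v 3) (v 4) (v 5) (v 6) (v 7)
  map_add' v w := by
    show mk (v 0 + w 0) (v 1 + w 1) (v 2 + w 2) (v 3 + w 3) (v 4 + w 4) (v 5 + w 5)
      (v 6 + w 6) (v 7 + w 7) = _
    rw [mk_add]
  map_smul' r v := by
    show mk (r * v 0) (r * v 1) (r * v 2) (r * v 3) (r * v 4) (r * v 5) (r * v 6) (r * v 7) = _
    rw [RingHom.id_apply, mk_smul]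

lemma φS_bij : Function.Bijective φS := by
  constructor
  · intro v w H
    obtain ⟨h0, h1, h2, h3, h4, h5, h6, h7⟩ := mk_inj H
    funext i
    fin_cases i <;> assumption
  · intro x
    exact ⟨![(x : Matrix (Fin 4) (Fin 4) ℝ) 0 0, (x : Matrix (Fin 4) (Fin 4) ℝ) 0 1,
      (x : Matrix (Fin 4) (Fin 4) ℝ) 1 0, (x : Matrix (Fin 4) (Fin 4) ℝ) 0 3,
      (x : Matrix (Fin 4) (Fin 4) ℝ) 1 3, (x : Matrix (Fin 4) (Fin 4) ℝ) 2 0,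
      (x : Matrix (Fin 4) (Fin 4) ℝ) 2 1, (x : Matrix (Fin 4) (Fin 4) ℝ) 2 3],
      (coords x).symm⟩

theorem finrank_S : Module.finrank ℝ ↥S = 8 := by
  rw [← (LinearEquiv.ofBijective φS φS_bij).finrank_eq]
  simp

instance : Module.Finite ℝ ↥S :=
  Module.Finite.equiv (LinearEquiv.ofBijective φS φS_bij)

lemma Scoe_add (x y : ↥S) : ((x+y : ↥S) : Matrix (Fin 4) (Fin 4) ℝ) = ↑x + ↑y := rfl
lemma Scoe_smul (r : ℝ) (x : ↥S) : ((r•x : ↥S) : Matrix (Fin 4) (Fin 4) ℝ) = r • ↑x := rfl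
lemma Scoe_zero : ((0 : ↥S) : Matrix (Fin 4) (Fin 4) ℝ) = 0 := rfl

noncomputable def Iideal : LieIdeal ℝ ↥S where
  carrier := {x : ↥S | (x : Matrix (Fin 4) (Fin 4) ℝ) 0 0 = 0 ∧
    (x : Matrix (Fin 4) (Fin 4) ℝ) 0 1 = 0 ∧ (x : Matrix (Fin 4) (Fin 4) ℝ) 1 0 = 0}
  add_mem' := by
    intro x y hx hy
    refine ⟨?_, ?_, ?_⟩ <;>
      simp [Scoe_add, Matrix.add_apply, hx.1, hx.2.1, hx.2.2, hy.1, hy.2.1, hy.2.2]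
  zero_mem' := by
    refine ⟨?_, ?_, ?_⟩ <;> simp [Scoe_zero]
  smul_mem' := by
    intro r x hx
    refine ⟨?_, ?_, ?_⟩ <;>
      simp [Scoe_smul, Matrix.smul_apply, hx.1, hx.2.1, hx.2.2]
  lie_mem := by
    intro x m hm
    refine ⟨?_, ?_, ?_⟩ <;> rw [bracket_coords x m] <;>
      simp [hm.1, hm.2.1, hm.2.2]

lemma mem_Iideal_iff (x : ↥S) : x ∈ Iideal ↔
    (x : Matrix (Fin 4) (Fin 4) ℝ) 0 0 = 0 ∧
    (x : Matrix (Fin 4) (Fin 4) ℝ) 0 1 = 0 ∧ (x : Matrix (Fin 4) (Fin 4) ℝ) 1 0 = 0 :=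
  Iff.rfl

lemma mk_mem_Iideal (d e f g h : ℝ) : mk 0 0 0 d e f g h ∈ Iideal :=
  ⟨mk00 .., mk01 .., mk10 ..⟩

lemma coordsI (x : ↥S) (hx : x ∈ Iideal) :
    x = mk 0 0 0 ((x : Matrix (Fin 4) (Fin 4) ℝ) 0 3) ((x : Matrix (Fin 4) (Fin 4) ℝ) 1 3)
    ((x : Matrix (Fin 4) (Fin 4) ℝ) 2 0) ((x : Matrix (Fin 4) (Fin 4) ℝ) 2 1)
    ((x : Matrix (Fin 4) (Fin 4) ℝ) 2 3) := by
  have := coords x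
  rw [hx.1, hx.2.1, hx.2.2] at this
  exact this

noncomputable def φI : (Fin 5 → ℝ) →ₗ[ℝ] ↥Iideal where
  toFun v := ⟨mk 0 0 0 (v 0) (v 1) (v 2) (v 3) (v 4), mk_mem_Iideal ..⟩
  map_add' v w := by
    apply Subtype.ext
    show mk 0 0 0 (v 0 + w 0) (v 1 + w 1) (v 2 + w 2) (v 3 + w 3) (v 4 + w 4) = _
    rw [show ((⟨mk 0 0 0 (v 0) (v 1) (v 2) (v 3) (v 4), mk_mem_Iideal ..⟩ +
        ⟨mk 0 0 0 (w 0) (w 1) (w 2) (w 3) (w 4), mk_mem_Iideal ..⟩ : ↥Iideal) : ↥S) =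
      mk 0 0 0 (v 0) (v 1) (v 2) (v 3) (v 4) + mk 0 0 0 (w 0) (w 1) (w 2) (w 3) (w 4) from rfl]
    rw [mk_add]
    norm_num
  map_smul' r v := by
    apply Subtype.ext
    show mk 0 0 0 (r * v 0) (r * v 1) (r * v 2) (r * v 3) (r * v 4) = _
    rw [RingHom.id_apply]
    rw [show (((r • ⟨mk 0 0 0 (v 0) (v 1) (v 2) (v 3) (v 4), mk_mem_Iideal ..⟩ : ↥Iideal)) : ↥S) =
      r • mk 0 0 0 (v 0) (v 1) (v 2) (v 3) (v 4) from rfl]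
    rw [mk_smul]
    norm_num

lemma φI_bij : Function.Bijective φI := by
  constructor
  · intro v w H
    have H' : mk 0 0 0 (v 0) (v 1) (v 2) (v 3) (v 4) =
        mk 0 0 0 (w 0) (w 1) (w 2) (w 3) (w 4) := congrArg Subtype.val H
    obtain ⟨-, -, -, h3, h4, h5, h6, h7⟩ := mk_inj H'
    funext i
    fin_cases i <;> assumption
  · intro x
    refine ⟨![((x : ↥S) : Matrix (Fin 4) (Fin 4) ℝ) 0 3, ((x : ↥S) : Matrix (Fin 4) (Fin 4) ℝ) 1 3,
      ((x : ↥S) : Matrix (Fin 4) (Fin 4) ℝ) 2 0, ((x : ↥S) : Matrix (Fin 4) (Fin 4) ℝ) 2 1,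
      ((x : ↥S) : Matrix (Fin 4) (Fin 4) ℝ) 2 3], Subtype.ext ?_⟩
    exact (coordsI x.1 x.2).symm

theorem finrank_I : Module.finrank ℝ ↥Iideal = 5 := by
  rw [← (LinearEquiv.ofBijective φI φI_bij).finrank_eq]
  simp

noncomputable instance : Module.Finite ℝ ↥Iideal :=
  Module.Finite.equiv (LinearEquiv.ofBijective φI φI_bij)

lemma Icoe_bracket (x y : ↥Iideal) :
    ((⁅x,y⁆ : ↥Iideal) : ↥S) = ⁅(x : ↥S), (y : ↥S)⁆ := rfl

set_option maxHeartbeats 1000000 in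
lemma double_bracket_zero (x y : ↥Iideal) : ⁅x, ⁅x, y⁆⁆ = 0 := by
  obtain ⟨hx1, hx2, hx3⟩ := x.2
  obtain ⟨hy1, hy2, hy3⟩ := y.2
  apply Subtype.ext
  have h1 : ((⁅x, ⁅x, y⁆⁆ : ↥Iideal) : ↥S) = ⁅(x : ↥S), ⁅(x : ↥S), (y : ↥S)⁆⁆ := rfl
  have h0 : ((0 : ↥Iideal) : ↥S) = 0 := rfl
  rw [h1, h0, bracket_coords ((x : ↥S)) (⁅(x : ↥S), (y : ↥S)⁆),
    bracket_coords (x : ↥S) (y : ↥S), ← mk_zero]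
  simp [hx1, hx2, hx3, hy1, hy2, hy3]

theorem nilpotent_I : LieRing.IsNilpotent ↥Iideal := by
  rw [LieAlgebra.isNilpotent_iff_forall (R := ℝ)]
  intro x
  refine ⟨2, LinearMap.ext fun y => ?_⟩
  rw [pow_two, Module.End.mul_apply, LieAlgebra.ad_apply, LieAlgebra.ad_apply,
    double_bracket_zero, LinearMap.zero_apply]


noncomputable def gen (d e f g h : ℝ) : ↥Iideal := ⟨mk 0 0 0 d e f g h, mk_mem_Iideal ..⟩

@[simp] lemma gen03 (d e f g h : ℝ) :
    (((gen d e f g h : ↥Iideal) : ↥S) : Matrix (Fin 4) (Fin 4) ℝ) 0 3 = d := mk03 ..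
@[simp] lemma gen13 (d e f g h : ℝ) :
    (((gen d e f g h : ↥Iideal) : ↥S) : Matrix (Fin 4) (Fin 4) ℝ) 1 3 = e := mk13 ..
@[simp] lemma gen20 (d e f g h : ℝ) :
    (((gen d e f g h : ↥Iideal) : ↥S) : Matrix (Fin 4) (Fin 4) ℝ) 2 0 = f := mk20 ..
@[simp] lemma gen21 (d e f g h : ℝ) :
    (((gen d e f g h : ↥Iideal) : ↥S) : Matrix (Fin 4) (Fin 4) ℝ) 2 1 = g := mk21 ..
@[simp] lemma gen23 (d e f g h : ℝ) :
    (((gen d e f g h : ↥Iideal) : ↥S) : Matrix (Fin 4) (Fin 4) ℝ) 2 3 = h := mk23 ..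
@[simp] lemma gen00 (d e f g h : ℝ) :
    (((gen d e f g h : ↥Iideal) : ↥S) : Matrix (Fin 4) (Fin 4) ℝ) 0 0 = 0 := mk00 ..
@[simp] lemma gen01 (d e f g h : ℝ) :
    (((gen d e f g h : ↥Iideal) : ↥S) : Matrix (Fin 4) (Fin 4) ℝ) 0 1 = 0 := mk01 ..
@[simp] lemma gen10 (d e f g h : ℝ) :
    (((gen d e f g h : ↥Iideal) : ↥S) : Matrix (Fin 4) (Fin 4) ℝ) 1 0 = 0 := mk10 ..

lemma gen_coords (x : ↥Iideal) : x = gen (((x : ↥S) : Matrix (Fin 4) (Fin 4) ℝ) 0 3)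
    (((x : ↥S) : Matrix (Fin 4) (Fin 4) ℝ) 1 3) (((x : ↥S) : Matrix (Fin 4) (Fin 4) ℝ) 2 0)
    (((x : ↥S) : Matrix (Fin 4) (Fin 4) ℝ) 2 1) (((x : ↥S) : Matrix (Fin 4) (Fin 4) ℝ) 2 3) :=
  Subtype.ext (coordsI x.1 x.2)

noncomputable def zI : ↥Iideal := gen 0 0 0 0 1

lemma mem_center_iff (x : ↥Iideal) : x ∈ LieAlgebra.center ℝ ↥Iideal ↔
    (((x : ↥S) : Matrix (Fin 4) (Fin 4) ℝ) 0 3 = 0 ∧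
     ((x : ↥S) : Matrix (Fin 4) (Fin 4) ℝ) 1 3 = 0 ∧
     ((x : ↥S) : Matrix (Fin 4) (Fin 4) ℝ) 2 0 = 0 ∧
     ((x : ↥S) : Matrix (Fin 4) (Fin 4) ℝ) 2 1 = 0) := by
  rw [LieModule.mem_maxTrivSubmodule]
  constructor
  · intro hx
    refine ⟨?_, ?_, ?_, ?_⟩
    · have := congrArg (fun w : ↥Iideal => ((w : ↥S) : Matrix (Fin 4) (Fin 4) ℝ) 2 3)
        (hx (gen 0 0 1 0 0))
      simpa [Icoe_bracket,
        bracket_coords ((gen 0 0 1 0 0 : ↥Iideal) : ↥S) ((x : ↥Iideal) : ↥S)] using this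
    · have := congrArg (fun w : ↥Iideal => ((w : ↥S) : Matrix (Fin 4) (Fin 4) ℝ) 2 3)
        (hx (gen 0 0 0 1 0))
      simpa [Icoe_bracket,
        bracket_coords ((gen 0 0 0 1 0 : ↥Iideal) : ↥S) ((x : ↥Iideal) : ↥S)] using this
    · have := congrArg (fun w : ↥Iideal => ((w : ↥S) : Matrix (Fin 4) (Fin 4) ℝ) 2 3)
        (hx (gen 1 0 0 0 0))
      simpa [Icoe_bracket,
        bracket_coords ((gen 1 0 0 0 0 : ↥Iideal) : ↥S) ((x : ↥Iideal) : ↥S)] using this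
    · have := congrArg (fun w : ↥Iideal => ((w : ↥S) : Matrix (Fin 4) (Fin 4) ℝ) 2 3)
        (hx (gen 0 1 0 0 0))
      simpa [Icoe_bracket,
        bracket_coords ((gen 0 1 0 0 0 : ↥Iideal) : ↥S) ((x : ↥Iideal) : ↥S)] using this
  · rintro ⟨h1, h2, h3, h4⟩ y
    obtain ⟨hy1, hy2, hy3⟩ := y.2
    obtain ⟨hx1, hx2, hx3⟩ := x.2
    apply Subtype.ext
    rw [show ((0 : ↥Iideal) : ↥S) = 0 from rfl]
    rw [Icoe_bracket, bracket_coords, ← mk_zero]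
    simp [h1, h2, h3, h4, hy1, hy2, hy3, hx1, hx2, hx3]

lemma smul_zI (r : ℝ) : r • zI = gen 0 0 0 0 r := by
  apply Subtype.ext
  show r • mk 0 0 0 0 0 0 0 1 = mk 0 0 0 0 0 0 0 r
  rw [mk_smul]; norm_num

lemma zI_mem_center : zI ∈ LieAlgebra.center ℝ ↥Iideal := by
  rw [mem_center_iff]
  refine ⟨?_, ?_, ?_, ?_⟩ <;> simp [zI]

set_option synthInstance.maxHeartbeats 1000000 in
noncomputable def φZ : ℝ →ₗ[ℝ] ↥(LieAlgebra.center ℝ ↥Iideal) where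
  toFun r := ⟨r • zI, (LieAlgebra.center ℝ ↥Iideal).smul_mem r zI_mem_center⟩
  map_add' r s := Subtype.ext (add_smul r s zI)
  map_smul' r s := Subtype.ext (mul_smul r s zI)

lemma φZ_bij : Function.Bijective φZ := by
  constructor
  · intro r s H
    have hrs : r • zI = s • zI := congrArg Subtype.val H
    have H' : gen 0 0 0 0 r = gen 0 0 0 0 s := by
      rw [← smul_zI, ← smul_zI]; exact hrs
    have := mk_inj (congrArg Subtype.val H')
    exact this.2.2.2.2.2.2.2
  · intro x
    obtain ⟨h1, h2, h3, h4⟩ := (mem_center_iff x.1).mp x.2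
    refine ⟨(((x.1 : ↥S) : Matrix (Fin 4) (Fin 4) ℝ)) 2 3, Subtype.ext ?_⟩
    have : (((x.1 : ↥S) : Matrix (Fin 4) (Fin 4) ℝ)) 2 3 • zI = x.1 := by
      rw [smul_zI]
      conv_rhs => rw [gen_coords x.1]
      rw [h1, h2, h3, h4]
    exact this

theorem finrank_center : Module.finrank ℝ ↥(LieAlgebra.center ℝ ↥Iideal) = 1 := by
  rw [← (LinearEquiv.ofBijective φZ φZ_bij).finrank_eq]
  simp


noncomputable def Ee : ↥S := mk 0 1 0 0 0 0 0 0
noncomputable def Ff : ↥S := mk 0 0 1 0 0 0 0 0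

lemma key1 (D : LieIdeal ℝ ↥S) (x : ↥S) (hx : x ∈ D)
    (hne : ¬((x : Matrix (Fin 4) (Fin 4) ℝ) 0 0 = 0 ∧ (x : Matrix (Fin 4) (Fin 4) ℝ) 0 1 = 0 ∧
      (x : Matrix (Fin 4) (Fin 4) ℝ) 1 0 = 0)) :
    ∃ u ∈ D, (u : Matrix (Fin 4) (Fin 4) ℝ) 0 1 ≠ 0 := by
  by_cases hc : (x : Matrix (Fin 4) (Fin 4) ℝ) 1 0 = 0
  · by_cases ha : (x : Matrix (Fin 4) (Fin 4) ℝ) 0 0 = 0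
    · exact ⟨x, hx, fun hb => hne ⟨ha, hb, hc⟩⟩
    · refine ⟨⁅Ee, x⁆, D.lie_mem hx, ?_⟩
      have hval : ((⁅Ee, x⁆ : ↥S) : Matrix (Fin 4) (Fin 4) ℝ) 0 1 =
          -2 * (x : Matrix (Fin 4) (Fin 4) ℝ) 0 0 := by
        rw [bracket_coords Ee x]
        simp [Ee]
      rw [hval]
      exact fun H => ha (by linarith)
  · refine ⟨⁅Ee, ⁅Ee, x⁆⁆, D.lie_mem (D.lie_mem hx), ?_⟩
    have hval : ((⁅Ee, ⁅Ee, x⁆⁆ : ↥S) : Matrix (Fin 4) (Fin 4) ℝ) 0 1 =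
        -2 * (x : Matrix (Fin 4) (Fin 4) ℝ) 1 0 := by
      rw [bracket_coords Ee ⁅Ee, x⁆, bracket_coords Ee x]
      simp [Ee]
    rw [hval]
    exact fun H => hc (by linarith)

lemma key2 (D : LieIdeal ℝ ↥S) (u : ↥S) (hu : u ∈ D)
    (hb : (u : Matrix (Fin 4) (Fin 4) ℝ) 0 1 ≠ 0) :
    ∃ z ∈ ⁅D, D⁆, (z : Matrix (Fin 4) (Fin 4) ℝ) 0 1 ≠ 0 := by
  refine ⟨⁅⁅Ff, u⁆, u⁆, LieSubmodule.lie_mem_lie (D.lie_mem hu) hu, ?_⟩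
  have hval : ((⁅⁅Ff, u⁆, u⁆ : ↥S) : Matrix (Fin 4) (Fin 4) ℝ) 0 1 =
      -2 * ((u : Matrix (Fin 4) (Fin 4) ℝ) 0 1)^2 := by
    rw [bracket_coords ⁅Ff, u⁆ u, bracket_coords Ff u]
    simp [Ff]
    ring
  rw [hval]
  intro H
  apply hb
  have h2 : ((u : Matrix (Fin 4) (Fin 4) ℝ) 0 1)^2 = 0 := by linarith
  exact (pow_eq_zero_iff two_ne_zero).mp h2

lemma key (D : LieIdeal ℝ ↥S) (x : ↥S) (hx : x ∈ D)
    (hne : ¬((x : Matrix (Fin 4) (Fin 4) ℝ) 0 0 = 0 ∧ (x : Matrix (Fin 4) (Fin 4) ℝ) 0 1 = 0 ∧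
      (x : Matrix (Fin 4) (Fin 4) ℝ) 1 0 = 0)) :
    ∃ z ∈ ⁅D, D⁆, ¬((z : Matrix (Fin 4) (Fin 4) ℝ) 0 0 = 0 ∧
      (z : Matrix (Fin 4) (Fin 4) ℝ) 0 1 = 0 ∧ (z : Matrix (Fin 4) (Fin 4) ℝ) 1 0 = 0) := by
  obtain ⟨u, hu, hub⟩ := key1 D x hx hne
  obtain ⟨z, hz, hzb⟩ := key2 D u hu hub
  exact ⟨z, hz, fun h => hzb h.2.1⟩

lemma radical_le : LieAlgebra.radical ℝ ↥S ≤ Iideal := by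
  apply sSup_le
  rintro J hJ
  rw [Set.mem_setOf_eq] at hJ
  intro x hx
  rw [mem_Iideal_iff]
  by_contra hne
  obtain ⟨k, hk⟩ := LieAlgebra.IsSolvable.solvable (R := ℝ) (L := J)
  rw [LieIdeal.derivedSeries_eq_bot_iff] at hk
  have H : ∀ n : ℕ, ∃ u ∈ LieAlgebra.derivedSeriesOfIdeal ℝ ↥S n J,
      ¬((u : Matrix (Fin 4) (Fin 4) ℝ) 0 0 = 0 ∧ (u : Matrix (Fin 4) (Fin 4) ℝ) 0 1 = 0 ∧
        (u : Matrix (Fin 4) (Fin 4) ℝ) 1 0 = 0) := by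
    intro n
    induction n with
    | zero =>
      rw [LieAlgebra.derivedSeriesOfIdeal_zero]
      exact ⟨x, hx, hne⟩
    | succ n ih =>
      obtain ⟨u, hu, hu'⟩ := ih
      rw [LieAlgebra.derivedSeriesOfIdeal_succ]
      exact key _ u hu hu'
  obtain ⟨u, hu, hu'⟩ := H k
  rw [hk, LieSubmodule.mem_bot] at hu
  subst hu
  exact hu' ⟨rfl, rfl, rfl⟩

instance : IsNoetherian ℝ ↥S := inferInstance

lemma I_le_radical : Iideal ≤ LieAlgebra.radical ℝ ↥S := by
  haveI := nilpotent_I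
  haveI : LieAlgebra.IsSolvable ↥Iideal := inferInstance
  exact (LieAlgebra.LieIdeal.solvable_iff_le_radical ℝ ↥S Iideal).mp this

lemma Iideal_eq_radical : Iideal = LieAlgebra.radical ℝ ↥S :=
  le_antisymm I_le_radical radical_le


lemma Smat000 (d e f g h : ℝ) :
    Smat 0 0 0 d e f g h = !![0, 0, 0, d; 0, 0, 0, e; f, g, 0, h; 0, 0, 0, 0] := by
  simp [Smat]

lemma coe_mk (a b c d e f g h : ℝ) :
    ((mk a b c d e f g h : ↥S) : Matrix (Fin 4) (Fin 4) ℝ) = Smat a b c d e f g h := rfl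

lemma mem_Iideal_iff' (x : ↥S) : x ∈ Iideal ↔ ∃ d e f g h : ℝ,
    (x : Matrix (Fin 4) (Fin 4) ℝ) = !![0, 0, 0, d; 0, 0, 0, e; f, g, 0, h; 0, 0, 0, 0] := by
  constructor
  · intro hx
    refine ⟨(x : Matrix (Fin 4) (Fin 4) ℝ) 0 3, (x : Matrix (Fin 4) (Fin 4) ℝ) 1 3,
      (x : Matrix (Fin 4) (Fin 4) ℝ) 2 0, (x : Matrix (Fin 4) (Fin 4) ℝ) 2 1,
      (x : Matrix (Fin 4) (Fin 4) ℝ) 2 3, ?_⟩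
    conv_lhs => rw [coordsI x hx]
    rw [coe_mk, Smat000]
  · rintro ⟨d, e, f, g, h, hM⟩
    refine ⟨?_, ?_, ?_⟩ <;> rw [hM] <;> rfl

end L813

/-- The 4×4 matrices `[[a, b, 0, d], [c, -a, 0, e], [f, g, 0, h], [0, 0, 0, 0]]` form an
8-dimensional Lie subalgebra of `gl(4, ℝ)` (realizing Turkowski's `L_{8.13, ε = -1}`); the
subset with `a = b = c = 0` is a 5-dimensional nilpotent ideal with 1-dimensional center
(the 5-dimensional Heisenberg algebra), equal to the solvable radical. -/
theorem L813epsneg1_representation :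
    ∃ S : LieSubalgebra ℝ (Matrix (Fin 4) (Fin 4) ℝ),
      (S : Set (Matrix (Fin 4) (Fin 4) ℝ)) =
        {M | ∃ a b c d e f g h : ℝ,
          M = !![a, b, 0, d; c, -a, 0, e; f, g, 0, h; 0, 0, 0, 0]} ∧
      Module.finrank ℝ ↥S = 8 ∧
      ∃ I : LieIdeal ℝ ↥S,
        (∀ x : ↥S, x ∈ I ↔ ∃ d e f g h : ℝ,
          (x : Matrix (Fin 4) (Fin 4) ℝ) = !![0, 0, 0, d; 0, 0, 0, e; f, g, 0, h; 0, 0, 0, 0]) ∧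
        Module.finrank ℝ ↥I = 5 ∧
        LieRing.IsNilpotent ↥I ∧
        Module.finrank ℝ ↥(LieAlgebra.center ℝ ↥I) = 1 ∧
        I = LieAlgebra.radical ℝ ↥S := by
  exact ⟨L813.S, rfl, L813.finrank_S, L813.Iideal, L813.mem_Iideal_iff', L813.finrank_I,
    L813.nilpotent_I, L813.finrank_center, L813.Iideal_eq_radical⟩
end

section
/- The set S of real 4×4 matrices of the form [[a, b, d, e],[c, −a, f, g],[0, 0, h, h],[0, 0, 0, h]] with a,b,c,d,e,f,g,h ∈ ℝ is a Lie subalgebra of gl(4,ℝ) of dimension 8 over ℝ, and the subset of such matrices with a = b = c = 0 is a 5-dimensional solvable Lie ideal of S that equals the solvable radical of S. (This realizes Turkowski's 8-dimensional algebra L_{8.16} by 4×4 matrices, showing its minimal faithful matrix representation has dimension 4.) -/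
attribute [local instance 100] LieRing.ofAssociativeRing

namespace L816aux
open Matrix
abbrev gl4 := Matrix (Fin 4) (Fin 4) ℝ

def mm (a b c d e f g h : ℝ) : gl4 := !![a,b,d,e; c,-a,f,g; 0,0,h,h; 0,0,0,h]

def P (M : gl4) : Prop :=
  M 1 1 = -M 0 0 ∧ M 2 0 = 0 ∧ M 2 1 = 0 ∧ M 3 0 = 0 ∧ M 3 1 = 0 ∧ M 3 2 = 0 ∧
  M 2 2 = M 3 3 ∧ M 2 3 = M 3 3

lemma mem_iff (M : gl4) :
    (∃ a b c d e f g h : ℝ, M = mm a b c d e f g h) ↔ P M := by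
  constructor
  · rintro ⟨a,b,c,d,e,f,g,h,rfl⟩
    simp [P, mm, Matrix.vecHead, Matrix.vecTail]
  · rintro ⟨h1,h2,h3,h4,h5,h6,h7,h8⟩
    exact ⟨M 0 0, M 0 1, M 1 0, M 0 2, M 0 3, M 1 2, M 1 3, M 3 3, by
      ext i j
      fin_cases i <;> fin_cases j <;>
        simp_all [mm, Matrix.vecHead, Matrix.vecTail]⟩

lemma P_bracket {M N : gl4} (hM : P M) (hN : P N) : P (M * N - N * M) := by
  obtain ⟨a1,a2,a3,a4,a5,a6,a7,a8⟩ := hM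
  obtain ⟨b1,b2,b3,b4,b5,b6,b7,b8⟩ := hN
  refine ⟨?_,?_,?_,?_,?_,?_,?_,?_⟩ <;>
    simp [Matrix.mul_apply, Fin.sum_univ_four, a1,a2,a3,a4,a5,a6,a7,a8,
      b1,b2,b3,b4,b5,b6,b7,b8] <;> ring

def S : LieSubalgebra ℝ gl4 where
  carrier := {M | ∃ a b c d e f g h : ℝ, M = mm a b c d e f g h}
  add_mem' := by
    intro x y hx hy
    rw [Set.mem_setOf_eq, mem_iff] at *
    obtain ⟨a1,a2,a3,a4,a5,a6,a7,a8⟩ := hx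
    obtain ⟨b1,b2,b3,b4,b5,b6,b7,b8⟩ := hy
    refine ⟨?_,?_,?_,?_,?_,?_,?_,?_⟩ <;> simp_all <;> ring
  zero_mem' := by rw [Set.mem_setOf_eq, mem_iff]; refine ⟨?_,?_,?_,?_,?_,?_,?_,?_⟩ <;> simp
  smul_mem' := by
    intro c x hx
    rw [Set.mem_setOf_eq, mem_iff] at *
    obtain ⟨a1,a2,a3,a4,a5,a6,a7,a8⟩ := hx
    refine ⟨?_,?_,?_,?_,?_,?_,?_,?_⟩ <;> simp_all <;> ring
  lie_mem' := by
    intro x y hx hy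
    rw [Set.mem_setOf_eq, mem_iff] at *
    rw [Ring.lie_def]
    exact P_bracket hx hy

def φ : (Fin 8 → ℝ) →ₗ[ℝ] gl4 where
  toFun v := mm (v 0) (v 1) (v 2) (v 3) (v 4) (v 5) (v 6) (v 7)
  map_add' u v := by
    ext i j
    fin_cases i <;> fin_cases j <;> simp [mm, Matrix.vecHead, Matrix.vecTail] <;> ring
  map_smul' c v := by
    ext i j
    fin_cases i <;> fin_cases j <;> simp [mm, Matrix.vecHead, Matrix.vecTail]

lemma φ_inj : Function.Injective φ := by
  rw [injective_iff_map_eq_zero]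
  intro v hv
  have h : ∀ i j : Fin 4, mm (v 0) (v 1) (v 2) (v 3) (v 4) (v 5) (v 6) (v 7) i j = 0 := by
    intro i j; rw [show mm (v 0) (v 1) (v 2) (v 3) (v 4) (v 5) (v 6) (v 7) = 0 from hv]; rfl
  funext i
  fin_cases i
  · simpa [mm] using h 0 0
  · simpa [mm] using h 0 1
  · simpa [mm] using h 1 0
  · simpa [mm] using h 0 2
  · simpa [mm] using h 0 3
  · simpa [mm] using h 1 2
  · simpa [mm] using h 1 3
  · simpa [mm, Matrix.vecHead, Matrix.vecTail] using h 3 3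

lemma range_φ : LinearMap.range φ = S.toSubmodule := by
  ext M
  simp only [LinearMap.mem_range]
  constructor
  · rintro ⟨v, rfl⟩
    exact ⟨v 0, v 1, v 2, v 3, v 4, v 5, v 6, v 7, rfl⟩
  · rintro ⟨a,b,c,d,e,f,g,h,rfl⟩
    exact ⟨![a,b,c,d,e,f,g,h], rfl⟩

lemma finrank_S : Module.finrank ℝ ↥S = 8 := by
  have : Module.finrank ℝ (LinearMap.range φ) = 8 := by
    rw [LinearMap.finrank_range_of_inj φ_inj]
    simp
  rw [range_φ] at this
  exact this

def Q (x : ↥S) : Prop :=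
  (x : gl4) 0 0 = 0 ∧ (x : gl4) 0 1 = 0 ∧ (x : gl4) 1 0 = 0

lemma P_of_mem (x : ↥S) : P (x : gl4) := (mem_iff _).mp x.2

lemma Q_iff (x : ↥S) :
    Q x ↔ ∃ d e f g h : ℝ, (x : gl4) = !![0,0,d,e; 0,0,f,g; 0,0,h,h; 0,0,0,h] := by
  constructor
  · rintro ⟨h1, h2, h3⟩
    obtain ⟨p1,p2,p3,p4,p5,p6,p7,p8⟩ := P_of_mem x
    refine ⟨(x:gl4) 0 2, (x:gl4) 0 3, (x:gl4) 1 2, (x:gl4) 1 3, (x:gl4) 3 3, ?_⟩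
    ext i j
    fin_cases i <;> fin_cases j <;> simp_all [Matrix.vecHead, Matrix.vecTail]
  · rintro ⟨d,e,f,g,h,hx⟩
    refine ⟨?_, ?_, ?_⟩ <;> rw [hx] <;> simp [Matrix.vecHead, Matrix.vecTail]

def I : LieIdeal ℝ ↥S where
  carrier := {x | Q x}
  add_mem' := by rintro x y ⟨a1,a2,a3⟩ ⟨b1,b2,b3⟩; refine ⟨?_,?_,?_⟩ <;> simp_all
  zero_mem' := by refine ⟨?_,?_,?_⟩ <;> simp [Q]
  smul_mem' := by
    rintro c x ⟨a1,a2,a3⟩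
    have hc : ((c • x : ↥S) : gl4) = c • (x : gl4) := rfl
    refine ⟨?_,?_,?_⟩ <;> simp_all [hc]
  lie_mem := by
    rintro x m ⟨a1,a2,a3⟩
    obtain ⟨p1,p2,p3,p4,p5,p6,p7,p8⟩ := P_of_mem x
    obtain ⟨q1,q2,q3,q4,q5,q6,q7,q8⟩ := P_of_mem m
    have hb : ((⁅x, m⁆ : ↥S) : gl4) = (x : gl4) * m - m * x := by
      rw [← Ring.lie_def]; rfl
    refine ⟨?_, ?_, ?_⟩ <;>
      simp [Q, hb, Matrix.mul_apply, Fin.sum_univ_four, a1,a2,a3,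
        p1,p2,p3,p4,p5,p6,q1,q2,q3,q4,q5,q6] <;> ring_nf <;>
      simp_all <;> ring

lemma mem_S (a b c d e f g h : ℝ) : mm a b c d e f g h ∈ S :=
  ⟨a,b,c,d,e,f,g,h,rfl⟩

def ψ : (Fin 5 → ℝ) →ₗ[ℝ] ↥S where
  toFun v := ⟨mm 0 0 0 (v 0) (v 1) (v 2) (v 3) (v 4), mem_S _ _ _ _ _ _ _ _⟩
  map_add' u v := by
    apply Subtype.ext
    show mm _ _ _ _ _ _ _ _ = mm _ _ _ _ _ _ _ _ + mm _ _ _ _ _ _ _ _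
    ext i j
    fin_cases i <;> fin_cases j <;> simp [mm, Matrix.vecHead, Matrix.vecTail]
  map_smul' c v := by
    apply Subtype.ext
    show mm _ _ _ _ _ _ _ _ = c • mm _ _ _ _ _ _ _ _
    ext i j
    fin_cases i <;> fin_cases j <;> simp [mm, Matrix.vecHead, Matrix.vecTail]

lemma ψ_inj : Function.Injective ψ := by
  rw [injective_iff_map_eq_zero]
  intro v hv
  have hv' : mm 0 0 0 (v 0) (v 1) (v 2) (v 3) (v 4) = 0 := congrArg Subtype.val hv
  have h : ∀ i j : Fin 4, mm 0 0 0 (v 0) (v 1) (v 2) (v 3) (v 4) i j = 0 := by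
    intro i j; rw [hv']; rfl
  funext i
  fin_cases i
  · simpa [mm] using h 0 2
  · simpa [mm] using h 0 3
  · simpa [mm] using h 1 2
  · simpa [mm] using h 1 3
  · simpa [mm, Matrix.vecHead, Matrix.vecTail] using h 3 3

lemma mm0 (d e f g h : ℝ) :
    mm 0 0 0 d e f g h = !![0,0,d,e; 0,0,f,g; 0,0,h,h; 0,0,0,h] := by
  unfold mm; norm_num

lemma range_ψ : LinearMap.range ψ = I.toSubmodule := by
  ext x
  simp only [LinearMap.mem_range]
  constructor
  · rintro ⟨v, rfl⟩
    show Q _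
    rw [Q_iff]
    exact ⟨v 0, v 1, v 2, v 3, v 4, mm0 _ _ _ _ _⟩
  · intro hx
    obtain ⟨d,e,f,g,h,hx'⟩ := (Q_iff x).mp hx
    exact ⟨![d,e,f,g,h], Subtype.ext (by rw [show ((ψ ![d,e,f,g,h] : ↥S) : gl4) = mm 0 0 0 d e f g h from rfl, mm0, hx'])⟩

lemma finrank_I : Module.finrank ℝ ↥I = 5 := by
  have : Module.finrank ℝ (LinearMap.range ψ) = 5 := by
    rw [LinearMap.finrank_range_of_inj ψ_inj]
    simp
  rw [range_ψ] at this
  exact this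

-- entry facts for elements of I
lemma I_entries (x : ↥I) :
    ((x : ↥S) : gl4) 0 0 = 0 ∧ ((x : ↥S) : gl4) 0 1 = 0 ∧ ((x : ↥S) : gl4) 1 0 = 0 ∧
    ((x : ↥S) : gl4) 1 1 = 0 ∧ ((x : ↥S) : gl4) 2 0 = 0 ∧ ((x : ↥S) : gl4) 2 1 = 0 ∧
    ((x : ↥S) : gl4) 3 0 = 0 ∧ ((x : ↥S) : gl4) 3 1 = 0 ∧ ((x : ↥S) : gl4) 3 2 = 0 ∧
    ((x : ↥S) : gl4) 2 2 = ((x : ↥S) : gl4) 3 3 ∧ ((x : ↥S) : gl4) 2 3 = ((x : ↥S) : gl4) 3 3 := by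
  obtain ⟨q1, q2, q3⟩ := x.2
  obtain ⟨p1,p2,p3,p4,p5,p6,p7,p8⟩ := P_of_mem (x : ↥S)
  exact ⟨q1, q2, q3, by rw [p1, q1, neg_zero], p2, p3, p4, p5, p6, p7, p8⟩

lemma coe_bracket_I (x y : ↥I) :
    (((⁅x, y⁆ : ↥I) : ↥S) : gl4) =
      ((x : ↥S) : gl4) * ((y : ↥S) : gl4) - ((y : ↥S) : gl4) * ((x : ↥S) : gl4) := by
  rw [← Ring.lie_def]; rfl

lemma bracket_I_33 (x y : ↥I) : (((⁅x, y⁆ : ↥I) : ↥S) : gl4) 3 3 = 0 := by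
  obtain ⟨a1,a2,a3,a4,a5,a6,a7,a8,a9,a10,a11⟩ := I_entries x
  obtain ⟨b1,b2,b3,b4,b5,b6,b7,b8,b9,b10,b11⟩ := I_entries y
  rw [coe_bracket_I]
  simp [Matrix.mul_apply, Fin.sum_univ_four, a7, a8, a9, b7, b8, b9, mul_comm]

def Z : LieIdeal ℝ ↥I where
  carrier := {x | ((x : ↥S) : gl4) 3 3 = 0}
  add_mem' := by intro x y hx hy; simp_all [Set.mem_setOf_eq]
  zero_mem' := by show ((((0:↥I) : ↥S) : gl4)) 3 3 = 0; rfl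
  smul_mem' := by
    intro c x hx
    have : (((c • x : ↥I) : ↥S) : gl4) = c • ((x : ↥S) : gl4) := rfl
    simp_all [Set.mem_setOf_eq, this]
  lie_mem := by intro x m _; exact bracket_I_33 x m

lemma Z_entries (x : ↥I) (hx : x ∈ Z) :
    ∀ i j : Fin 4, (i = 2 ∨ i = 3 ∨ j = 0 ∨ j = 1) → ((x : ↥S) : gl4) i j = 0 := by
  obtain ⟨a1,a2,a3,a4,a5,a6,a7,a8,a9,a10,a11⟩ := I_entries x
  have h33 : ((x : ↥S) : gl4) 3 3 = 0 := hx
  intro i j hij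
  fin_cases i <;> fin_cases j <;> simp_all

lemma bracket_Z_zero (x y : ↥I) (hx : x ∈ Z) (hy : y ∈ Z) : (⁅x, y⁆ : ↥I) = 0 := by
  apply Subtype.ext; apply Subtype.ext
  show (((⁅x, y⁆ : ↥I) : ↥S) : gl4) = 0
  rw [coe_bracket_I]
  ext i j
  have hx' := Z_entries x hx
  have hy' := Z_entries y hy
  fin_cases i <;> fin_cases j <;>
    simp [Matrix.mul_apply, Fin.sum_univ_four, hx', hy']

instance I_solvable : LieAlgebra.IsSolvable ↥I := by
  rw [LieAlgebra.isSolvable_iff ℝ]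
  refine ⟨2, ?_⟩
  have hD1 : LieAlgebra.derivedSeries ℝ ↥I 1 ≤ Z := by
    rw [LieAlgebra.derivedSeries_def, LieAlgebra.derivedSeriesOfIdeal_succ]
    rw [LieSubmodule.lie_le_iff]
    intro x _ y _
    exact bracket_I_33 x y
  have h2 : LieAlgebra.derivedSeries ℝ ↥I 2 ≤ ⁅Z, Z⁆ := by
    rw [LieAlgebra.derivedSeries_def, LieAlgebra.derivedSeriesOfIdeal_succ,
      ← LieAlgebra.derivedSeries_def]
    exact LieSubmodule.mono_lie hD1 hD1
  have hZZ : ⁅Z, Z⁆ = (⊥ : LieIdeal ℝ ↥I) := by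
    rw [LieSubmodule.lie_eq_bot_iff]
    intro x hx y hy
    exact bracket_Z_zero x y hx hy
  rw [hZZ] at h2
  exact le_bot_iff.mp h2

-- sl2 elements
def HH : ↥S := ⟨mm 1 0 0 0 0 0 0 0, mem_S _ _ _ _ _ _ _ _⟩
def EE : ↥S := ⟨mm 0 1 0 0 0 0 0 0, mem_S _ _ _ _ _ _ _ _⟩
def FF : ↥S := ⟨mm 0 0 1 0 0 0 0 0, mem_S _ _ _ _ _ _ _ _⟩

lemma coe_bracket_S (x y : ↥S) :
    ((⁅x, y⁆ : ↥S) : gl4) = (x : gl4) * y - (y : gl4) * x := by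
  rw [← Ring.lie_def]; rfl

-- coordinate functionals
def aL : ↥S →ₗ[ℝ] ℝ where
  toFun w := (w : gl4) 0 0
  map_add' _ _ := rfl
  map_smul' _ _ := rfl

def bL : ↥S →ₗ[ℝ] ℝ where
  toFun w := (w : gl4) 0 1
  map_add' _ _ := rfl
  map_smul' _ _ := rfl

def cL : ↥S →ₗ[ℝ] ℝ where
  toFun w := (w : gl4) 1 0
  map_add' _ _ := rfl
  map_smul' _ _ := rfl

lemma aL_apply (w : ↥S) : aL w = (w : gl4) 0 0 := rfl
lemma bL_apply (w : ↥S) : bL w = (w : gl4) 0 1 := rfl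
lemma cL_apply (w : ↥S) : cL w = (w : gl4) 1 0 := rfl

lemma mem_I_iff (x : ↥S) : x ∈ I ↔ aL x = 0 ∧ bL x = 0 ∧ cL x = 0 := Iff.rfl

lemma coords_HH : aL HH = 1 ∧ bL HH = 0 ∧ cL HH = 0 := by
  refine ⟨?_, ?_, ?_⟩ <;> norm_num [aL_apply, bL_apply, cL_apply, HH, mm]
lemma coords_EE : aL EE = 0 ∧ bL EE = 1 ∧ cL EE = 0 := by
  refine ⟨?_, ?_, ?_⟩ <;> norm_num [aL_apply, bL_apply, cL_apply, EE, mm]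
lemma coords_FF : aL FF = 0 ∧ bL FF = 0 ∧ cL FF = 1 := by
  refine ⟨?_, ?_, ?_⟩ <;> norm_num [aL_apply, bL_apply, cL_apply, FF, mm]

lemma br_coords (u v : ↥S) :
    aL ⁅u, v⁆ = bL u * cL v - bL v * cL u ∧
    bL ⁅u, v⁆ = 2 * (aL u * bL v - bL u * aL v) ∧
    cL ⁅u, v⁆ = 2 * (cL u * aL v - aL u * cL v) := by
  obtain ⟨p1,p2,p3,p4,p5,p6,p7,p8⟩ := P_of_mem u
  obtain ⟨q1,q2,q3,q4,q5,q6,q7,q8⟩ := P_of_mem v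
  refine ⟨?_, ?_, ?_⟩ <;>
    simp [aL_apply, bL_apply, cL_apply, coe_bracket_S, Ring.lie_def, Matrix.mul_apply, Fin.sum_univ_four,
      p1,p2,p3,p4,p5,p6,q1,q2,q3,q4,q5,q6] <;> ring

lemma br_EF : ⁅EE, FF⁆ = HH := by
  apply Subtype.ext
  rw [coe_bracket_S]
  show (mm 0 1 0 0 0 0 0 0) * (mm 0 0 1 0 0 0 0 0) -
    (mm 0 0 1 0 0 0 0 0) * (mm 0 1 0 0 0 0 0 0) = mm 1 0 0 0 0 0 0 0
  ext i j
  fin_cases i <;> fin_cases j <;>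
    simp [mm, Matrix.mul_apply, Fin.sum_univ_four] <;> norm_num

lemma br_HE : ⁅HH, EE⁆ = (2:ℝ) • EE := by
  apply Subtype.ext
  rw [coe_bracket_S]
  show (mm 1 0 0 0 0 0 0 0) * (mm 0 1 0 0 0 0 0 0) -
    (mm 0 1 0 0 0 0 0 0) * (mm 1 0 0 0 0 0 0 0) = (2:ℝ) • mm 0 1 0 0 0 0 0 0
  ext i j
  fin_cases i <;> fin_cases j <;>
    simp [mm, Matrix.mul_apply, Fin.sum_univ_four] <;> norm_num

lemma br_HF : ⁅HH, FF⁆ = (-2:ℝ) • FF := by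
  apply Subtype.ext
  rw [coe_bracket_S]
  show (mm 1 0 0 0 0 0 0 0) * (mm 0 0 1 0 0 0 0 0) -
    (mm 0 0 1 0 0 0 0 0) * (mm 1 0 0 0 0 0 0 0) = (-2:ℝ) • mm 0 0 1 0 0 0 0 0
  ext i j
  fin_cases i <;> fin_cases j <;>
    simp [mm, Matrix.mul_apply, Fin.sum_univ_four] <;> norm_num

lemma HH_ne_zero : HH ≠ 0 := by
  intro h
  have : (HH : gl4) 0 0 = 0 := by rw [show (HH : gl4) = 0 from congrArg Subtype.val h]; rfl
  norm_num [HH, mm] at this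

lemma S_not_solvable : ¬ LieAlgebra.IsSolvable ↥S := by
  intro hsolv
  obtain ⟨k, hk⟩ := (LieAlgebra.isSolvable_iff ℝ _).mp hsolv
  have key : ∀ n : ℕ, HH ∈ LieAlgebra.derivedSeries ℝ ↥S n ∧
      EE ∈ LieAlgebra.derivedSeries ℝ ↥S n ∧ FF ∈ LieAlgebra.derivedSeries ℝ ↥S n := by
    intro n
    induction n with
    | zero =>
      rw [LieAlgebra.derivedSeries_def, LieAlgebra.derivedSeriesOfIdeal_zero]
      exact ⟨trivial, trivial, trivial⟩
    | succ n ih =>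
      obtain ⟨hH, hE, hF⟩ := ih
      rw [LieAlgebra.derivedSeries_def, LieAlgebra.derivedSeriesOfIdeal_succ,
        ← LieAlgebra.derivedSeries_def]
      refine ⟨?_, ?_, ?_⟩
      · rw [← br_EF]; exact LieSubmodule.lie_mem_lie hE hF
      · have : EE = (2:ℝ)⁻¹ • ⁅HH, EE⁆ := by rw [br_HE, smul_smul]; norm_num
        rw [this]
        exact Submodule.smul_mem _ _ (LieSubmodule.lie_mem_lie hH hE)
      · have : FF = (-2:ℝ)⁻¹ • ⁅HH, FF⁆ := by rw [br_HF, smul_smul]; norm_num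
        rw [this]
        exact Submodule.smul_mem _ _ (LieSubmodule.lie_mem_lie hH hF)
  have := (key k).1
  rw [hk, LieSubmodule.mem_bot] at this
  exact HH_ne_zero this

lemma dichotomy (J : LieIdeal ℝ ↥S) (hIJ : I ≤ J) : J = I ∨ J = ⊤ := by
  by_cases hle : J ≤ I
  · exact Or.inl (le_antisymm hle hIJ)
  · right
    obtain ⟨x, hxJ, hxI⟩ := SetLike.not_le_iff_exists.mp hle
    rw [mem_I_iff] at hxI
    -- produce an element of J with coordinates (0, t, 0), t ≠ 0
    have key : ∃ y, y ∈ J ∧ aL y = 0 ∧ cL y = 0 ∧ bL y ≠ 0 := by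
      obtain ⟨e1, e2, e3⟩ := coords_EE
      by_cases hc : cL x = 0
      · by_cases ha : aL x = 0
        · refine ⟨x, hxJ, ha, hc, ?_⟩
          intro hb; exact hxI ⟨ha, hb, hc⟩
        · refine ⟨⁅EE, x⁆, LieSubmodule.lie_mem J hxJ, ?_, ?_, ?_⟩
          · obtain ⟨h1, _, _⟩ := br_coords EE x; rw [h1, e2, e3, hc]; ring
          · obtain ⟨_, _, h3⟩ := br_coords EE x; rw [h3, e1, e3]; ring
          · obtain ⟨_, h2, _⟩ := br_coords EE x; rw [h2, e1, e2]
            simpa using ha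
      · refine ⟨⁅EE, ⁅EE, x⁆⁆, LieSubmodule.lie_mem J (LieSubmodule.lie_mem J hxJ), ?_, ?_, ?_⟩
        · obtain ⟨h1, _, _⟩ := br_coords EE ⁅EE, x⁆
          obtain ⟨_, _, g3⟩ := br_coords EE x
          rw [h1, g3, e1, e2, e3]; ring
        · obtain ⟨_, _, h3⟩ := br_coords EE ⁅EE, x⁆; rw [h3, e1, e3]; ring
        · obtain ⟨_, h2, _⟩ := br_coords EE ⁅EE, x⁆
          obtain ⟨g1, _, _⟩ := br_coords EE x
          rw [h2, e1, e2, g1, e2, e3]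
          simp only [one_mul, zero_mul, mul_zero, sub_zero, zero_sub, mul_neg]
          intro h; apply hc
          have := neg_eq_zero.mp h
          rcases mul_eq_zero.mp this with h' | h'
          · norm_num at h'
          · exact h'
    obtain ⟨y, hyJ, hya, hyc, hyb⟩ := key
    obtain ⟨e1, e2, e3⟩ := coords_EE
    have hEJ : EE ∈ J := by
      have h1 : (bL y)⁻¹ • y ∈ J := Submodule.smul_mem _ _ hyJ
      have h2 : (bL y)⁻¹ • y - EE ∈ I := by
        rw [mem_I_iff]
        refine ⟨?_, ?_, ?_⟩ <;>
          simp [map_sub, _root_.map_smul, hya, hyc, e1, e2, e3, inv_mul_cancel₀ hyb]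
      have : EE = (bL y)⁻¹ • y - ((bL y)⁻¹ • y - EE) := (sub_sub_cancel _ _).symm
      rw [this]
      exact sub_mem h1 (hIJ h2)
    obtain ⟨f1, f2, f3⟩ := coords_FF
    obtain ⟨d1, d2, d3⟩ := coords_HH
    have hHJ : HH ∈ J := by
      have hy2 : ⁅FF, EE⁆ ∈ J := LieSubmodule.lie_mem J hEJ
      have h2 : ⁅FF, EE⁆ + HH ∈ I := by
        obtain ⟨h1, h2', h3⟩ := br_coords FF EE
        rw [mem_I_iff]
        refine ⟨?_, ?_, ?_⟩ <;>
          simp [map_add, h1, h2', h3, e1, e2, e3, f1, f2, f3, d1, d2, d3]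
      have : HH = (⁅FF, EE⁆ + HH) - ⁅FF, EE⁆ := by abel
      rw [this]
      exact sub_mem (hIJ h2) hy2
    have hFJ : FF ∈ J := by
      have hz : ⁅FF, HH⁆ ∈ J := LieSubmodule.lie_mem J hHJ
      have h2 : ⁅FF, HH⁆ - (2:ℝ) • FF ∈ I := by
        obtain ⟨h1, h2', h3⟩ := br_coords FF HH
        rw [mem_I_iff]
        refine ⟨?_, ?_, ?_⟩ <;>
          simp [map_sub, _root_.map_smul, h1, h2', h3, e1, e2, e3, f1, f2, f3, d1, d2, d3]
      have : FF = (2:ℝ)⁻¹ • (⁅FF, HH⁆ - (⁅FF, HH⁆ - (2:ℝ) • FF)) := by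
        rw [sub_sub_cancel, smul_smul]; norm_num
      rw [this]
      exact Submodule.smul_mem _ _ (sub_mem hz (hIJ h2))
    apply le_antisymm le_top
    intro y _
    have hw : y - (aL y • HH + bL y • EE + cL y • FF) ∈ I := by
      rw [mem_I_iff]
      refine ⟨?_, ?_, ?_⟩ <;>
        simp [map_sub, map_add, _root_.map_smul, e1, e2, e3, f1, f2, f3, d1, d2, d3]
    have : y = (y - (aL y • HH + bL y • EE + cL y • FF)) +
        (aL y • HH + bL y • EE + cL y • FF) := by abel
    rw [this]
    exact add_mem (hIJ hw)
      (add_mem (add_mem (Submodule.smul_mem _ _ hHJ) (Submodule.smul_mem _ _ hEJ))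
        (Submodule.smul_mem _ _ hFJ))

instance : FiniteDimensional ℝ ↥S := by
  have h : FiniteDimensional ℝ ↥(LinearMap.range φ) := inferInstance
  rw [range_φ] at h
  exact h

lemma radical_eq : I = LieAlgebra.radical ℝ ↥S := by
  have hI_le : I ≤ LieAlgebra.radical ℝ ↥S :=
    (LieAlgebra.LieIdeal.solvable_iff_le_radical (R := ℝ) (L := ↥S) I).mp I_solvable
  refine le_antisymm hI_le ?_
  have hsolv : LieAlgebra.IsSolvable ↥(I + LieAlgebra.radical ℝ ↥S) := inferInstance
  have hle : I ≤ I + LieAlgebra.radical ℝ ↥S := le_sup_left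
  rcases dichotomy _ hle with h | h
  · calc LieAlgebra.radical ℝ ↥S ≤ I + LieAlgebra.radical ℝ ↥S := le_sup_right
      _ = I := h
  · exfalso
    rw [h] at hsolv
    exact S_not_solvable
      ((LieAlgebra.solvable_iff_equiv_solvable LieIdeal.topEquiv).mp hsolv)


end L816aux

/-- The 4×4 matrices `[[a, b, d, e], [c, -a, f, g], [0, 0, h, h], [0, 0, 0, h]]` form an
8-dimensional Lie subalgebra of `gl(4, ℝ)` (realizing Turkowski's `L_{8.16}`); the subset
with `a = b = c = 0` is a 5-dimensional solvable ideal equal to the solvable radical. -/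
theorem L816_representation :
    ∃ S : LieSubalgebra ℝ (Matrix (Fin 4) (Fin 4) ℝ),
      (S : Set (Matrix (Fin 4) (Fin 4) ℝ)) =
        {M | ∃ a b c d e f g h : ℝ,
          M = !![a, b, d, e; c, -a, f, g; 0, 0, h, h; 0, 0, 0, h]} ∧
      Module.finrank ℝ ↥S = 8 ∧
      ∃ I : LieIdeal ℝ ↥S,
        (∀ x : ↥S, x ∈ I ↔ ∃ d e f g h : ℝ,
          (x : Matrix (Fin 4) (Fin 4) ℝ) = !![0, 0, d, e; 0, 0, f, g; 0, 0, h, h; 0, 0, 0, h]) ∧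
        Module.finrank ℝ ↥I = 5 ∧
        LieAlgebra.IsSolvable ↥I ∧
        I = LieAlgebra.radical ℝ ↥S := by
  exact ⟨L816aux.S, rfl, L816aux.finrank_S, L816aux.I, fun x => L816aux.Q_iff x,
    L816aux.finrank_I, L816aux.I_solvable, L816aux.radical_eq⟩
end
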